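/- arXiv:2205.01365 — 5 statements merged into one kernel-verified Lean document; each statement's English description precedes it below -/
import Mathlib

section
/- For every deterministic Büchi automaton B = (Q, C, q_init, Δ, α) there is a unique set α_sat ⊆ Δ of Büchi transitions containing α such that the automaton B_sat obtained by replacing α with α_sat recognizes the same language as B, and B_sat is saturated (no strictly larger set of Büchi transitions on the same structure recognizes the same language). Moreover, α_sat is the set of transitions not appearing in any strongly connected component of the graph obtained from B by removing the α-transitions. -/
/-- The run of a deterministic automaton from state `q` on infinite word `s`. -/
def dbaRun {C Q : Type} (δ : Q → C → Q) (q : Q) (s : ℕ → C) : ℕ → Q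
  | 0 => q
  | n + 1 => δ (dbaRun δ q s n) (s n)

/-- The set of infinite words accepted (Büchi condition on transitions `acc`) from state `q`. -/
def accFrom {C Q : Type} (δ : Q → C → Q) (acc : Q → C → Prop) (q : Q) : Set (ℕ → C) :=
  {s | ∀ N, ∃ n ≥ N, acc (dbaRun δ q s n) (s n)}

/-- Extension `δ*` of the transition function to finite words. -/
def dstar {C Q : Type} (δ : Q → C → Q) (q : Q) (w : List C) : Q := w.foldl δ q

/-- `Safe(q)`: finite words whose run from `q` takes no Büchi transition. -/
def safeWords {C Q : Type} (δ : Q → C → Q) (acc : Q → C → Prop) (q : Q) : Set (List C) :=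
  {w | ∀ (i : ℕ) (h : i < w.length), ¬ acc (dstar δ q (w.take i)) (w.get ⟨i, h⟩)}

/-- `SafeCycles(q)`: α-free words from `q` that return to `q`. -/
def safeCycles {C Q : Type} (δ : Q → C → Q) (acc : Q → C → Prop) (q : Q) : Set (List C) :=
  {w | w ∈ safeWords δ acc q ∧ dstar δ q w = q}

/-- A DBA is saturated if no strictly larger set of Büchi transitions recognizes the same language. -/
def Saturated {C Q : Type} (δ : Q → C → Q) (acc : Q → C → Prop) (qinit : Q) : Prop :=
  ∀ acc' : Q → C → Prop, (∀ q c, acc q c → acc' q c) → acc' ≠ acc →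
    accFrom δ acc' qinit ≠ accFrom δ acc qinit

section Helpers
variable {C Q : Type}

lemma dstar_append (δ : Q → C → Q) (q : Q) (u v : List C) :
    dstar δ q (u ++ v) = dstar δ (dstar δ q u) v := List.foldl_append ..

lemma dstar_take_succ (δ : Q → C → Q) (q : Q) (v : List C) (r : ℕ) (h : r < v.length) :
    dstar δ q (v.take (r + 1)) = δ (dstar δ q (v.take r)) (v.get ⟨r, h⟩) := by
  rw [← List.take_concat_get' v r h, dstar_append]; rfl

lemma run_eq_dstar (δ : Q → C → Q) (q0 : Q) (s : ℕ → C) (u : List C)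
    (hs : ∀ i (h : i < u.length), s i = u.get ⟨i, h⟩) :
    ∀ n, n ≤ u.length → dbaRun δ q0 s n = dstar δ q0 (u.take n) := by
  intro n hn
  induction n with
  | zero => simp [dbaRun, dstar]
  | succ k ih =>
    have hk : k < u.length := hn
    rw [dbaRun, ih (Nat.le_of_lt hk), dstar_take_succ δ q0 u k hk, hs k hk]

lemma seg_take (δ : Q → C → Q) (q0 : Q) (s : ℕ → C) (a k : ℕ) :
    ∀ i, i ≤ k →
      dstar δ (dbaRun δ q0 s a) ((List.ofFn fun j : Fin k => s (a + j)).take i)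
        = dbaRun δ q0 s (a + i) := by
  intro i hi
  induction i with
  | zero => simp [dstar, dbaRun]
  | succ m ih =>
    have hm : m < (List.ofFn fun j : Fin k => s (a + j)).length := by
      simpa using lt_of_lt_of_le (Nat.lt_succ_self m) hi
    rw [dstar_take_succ _ _ _ m hm, ih (Nat.le_of_lt (Nat.lt_of_lt_of_le (Nat.lt_succ_self m) hi))]
    rw [List.get_ofFn]
    simp [dbaRun]

lemma accFrom_mono (δ : Q → C → Q) {acc1 acc2 : Q → C → Prop}
    (h : ∀ q c, acc1 q c → acc2 q c) (q0 : Q) :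
    accFrom δ acc1 q0 ⊆ accFrom δ acc2 q0 := by
  intro s hs N
  obtain ⟨n, hn, ha⟩ := hs N
  exact ⟨n, hn, h _ _ ha⟩

/-- the saturation -/
def accsatD (δ : Q → C → Q) (acc : Q → C → Prop) : Q → C → Prop := fun q c =>
  acc q c ∨ ¬ ∃ w : List C, w ∈ safeWords δ acc (δ q c) ∧ dstar δ (δ q c) w = q

/-- key direction: accsat accepts no more than acc -/
lemma accsat_sub [Fintype Q] (δ : Q → C → Q) (acc : Q → C → Prop) (q0 : Q) :
    accFrom δ (accsatD δ acc) q0 ⊆ accFrom δ acc q0 := by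
  intro s hs N
  by_contra hcon
  push_neg at hcon
  -- hcon : ∀ n ≥ N, ¬ acc (run n) (s n)
  have hs' : ∀ M : ℕ, ∃ n, M ≤ n ∧ accsatD δ acc (dbaRun δ q0 s n) (s n) := by
    intro M; obtain ⟨n, hn, h⟩ := hs M; exact ⟨n, hn, h⟩
  -- build strictly increasing sequence of accsat-firing positions ≥ N
  let g : ℕ → ℕ := fun k =>
    Nat.rec (Classical.choose (hs' N)) (fun _ ih => Classical.choose (hs' (ih + 1))) k
  have hg0 : N ≤ g 0 ∧ accsatD δ acc (dbaRun δ q0 s (g 0)) (s (g 0)) :=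
    Classical.choose_spec (hs' N)
  have hgs : ∀ k, g k + 1 ≤ g (k + 1) ∧
      accsatD δ acc (dbaRun δ q0 s (g (k + 1))) (s (g (k + 1))) := fun k =>
    Classical.choose_spec (hs' (g k + 1))
  have hmono : StrictMono g := strictMono_nat_of_lt_succ fun k => (hgs k).1
  have hNg : ∀ k, N ≤ g k := by
    intro k
    induction k with
    | zero => exact hg0.1
    | succ m ih => exact le_trans ih (le_trans (Nat.le_succ _) (hgs m).1)
  have hfire : ∀ k, accsatD δ acc (dbaRun δ q0 s (g k)) (s (g k)) := by
    intro k; cases k with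
    | zero => exact hg0.2
    | succ m => exact (hgs m).2
  have key : ∀ n m, N ≤ n → n < m → dbaRun δ q0 s n = dbaRun δ q0 s m →
      accsatD δ acc (dbaRun δ q0 s n) (s n) → False := by
    intro n m hNn hnm hqe hf
    rcases hf with ha | hne
    · exact hcon n hNn ha
    apply hne
    refine ⟨List.ofFn fun i : Fin (m - (n + 1)) => s (n + 1 + i), ?_, ?_⟩
    · intro i hi
      have hik : i < m - (n + 1) := by simpa using hi
      have hstart : δ (dbaRun δ q0 s n) (s n) = dbaRun δ q0 s (n + 1) := rfl
      rw [hstart, seg_take δ q0 s (n + 1) (m - (n + 1)) i (Nat.le_of_lt hik), List.get_ofFn]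
      simpa using hcon (n + 1 + i) (by omega)
    · have hstart : δ (dbaRun δ q0 s n) (s n) = dbaRun δ q0 s (n + 1) := rfl
      have hfull : (List.ofFn fun i : Fin (m - (n + 1)) => s (n + 1 + i)).take (m - (n + 1))
          = List.ofFn fun i : Fin (m - (n + 1)) => s (n + 1 + i) := by
        apply List.take_of_length_le; simp
      rw [hstart, ← hfull, seg_take δ q0 s (n + 1) (m - (n + 1)) (m - (n + 1)) le_rfl]
      have : n + 1 + (m - (n + 1)) = m := by omega
      rw [this, ← hqe]
  -- pigeonhole
  obtain ⟨k, l, hkl, heq⟩ :=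
    Finite.exists_ne_map_eq_of_infinite (fun k => dbaRun δ q0 s (g k))
  rcases hkl.lt_or_gt with h' | h'
  · exact key (g k) (g l) (hNg k) (hmono h') heq (hfire k)
  · exact key (g l) (g k) (hNg l) (hmono h') heq.symm (hfire l)

/-- pumping an α-free cycle yields a word separating `acc` from anything accepting `(q,c)` -/
lemma periodic_witness (δ : Q → C → Q) (acc : Q → C → Prop) (qinit q : Q) (c : C)
    (u w : List C) (hu : dstar δ qinit u = q)
    (hw : w ∈ safeWords δ acc (δ q c)) (hwret : dstar δ (δ q c) w = q)
    (hnacc : ¬ acc q c) :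
    ∃ s : ℕ → C, s ∉ accFrom δ acc qinit ∧
      ∀ acc' : Q → C → Prop, acc' q c → s ∈ accFrom δ acc' qinit := by
  have hp : 0 < (c :: w).length := by simp
  refine ⟨fun n => if h : n < u.length then u.get ⟨n, h⟩
    else (c :: w).get ⟨(n - u.length) % (c :: w).length, Nat.mod_lt _ hp⟩, ?_, ?_⟩
  all_goals
    set s : ℕ → C := fun n => if h : n < u.length then u.get ⟨n, h⟩
      else (c :: w).get ⟨(n - u.length) % (c :: w).length, Nat.mod_lt _ hp⟩ with hsdef
  all_goals
    have hagree : ∀ i (h : i < u.length), s i = u.get ⟨i, h⟩ := fun i h => dif_pos h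
  all_goals
    have hrunlen : dbaRun δ qinit s u.length = q := by
      rw [run_eq_dstar δ qinit s u hagree u.length le_rfl, List.take_length, hu]
  all_goals
    have hsval : ∀ j (hj : j % (c :: w).length < (c :: w).length),
        s (u.length + j) = (c :: w).get ⟨j % (c :: w).length, hj⟩ := by
      intro j hj
      show (if h : u.length + j < u.length then _ else _) = _
      rw [dif_neg (by omega)]
      congr 1
      exact Fin.ext (by simp)
  all_goals
    have hrun : ∀ j, dbaRun δ qinit s (u.length + j)
        = dstar δ q ((c :: w).take (j % (c :: w).length)) := by
      intro j
      induction j with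
      | zero => simpa [dstar] using hrunlen
      | succ j ih =>
        have key : dstar δ q ((c :: w).take ((j + 1) % (c :: w).length))
            = δ (dstar δ q ((c :: w).take (j % (c :: w).length)))
                ((c :: w).get ⟨j % (c :: w).length, Nat.mod_lt _ hp⟩) := by
          rcases Nat.lt_or_ge (j % (c :: w).length + 1) (c :: w).length with h | h
          · have e : (j + 1) % (c :: w).length = j % (c :: w).length + 1 := by
              have hd := Nat.div_add_mod j (c :: w).length
              have e2 : j + 1 = (c :: w).length * (j / (c :: w).length)
                  + (j % (c :: w).length + 1) := by omega
              rw [e2, Nat.mul_add_mod, Nat.mod_eq_of_lt h]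
            rw [e, dstar_take_succ δ q (c :: w) (j % (c :: w).length) (Nat.mod_lt _ hp)]
          · have hep : j % (c :: w).length + 1 = (c :: w).length := by
              have := Nat.mod_lt j hp; omega
            have e : (j + 1) % (c :: w).length = 0 := by
              have hd := Nat.div_add_mod j (c :: w).length
              have e2 : j + 1 = (c :: w).length * (j / (c :: w).length)
                  + (c :: w).length := by omega
              rw [e2, Nat.mul_add_mod, Nat.mod_self]
            rw [e, ← dstar_take_succ δ q (c :: w) (j % (c :: w).length) (Nat.mod_lt _ hp), hep,
              List.take_of_length_le le_rfl]
            show q = dstar δ (δ q c) w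
            exact hwret.symm
        rw [show u.length + (j + 1) = (u.length + j) + 1 from rfl, dbaRun, ih,
          hsval j (Nat.mod_lt _ hp), key]
  all_goals
    have hcyc : ∀ r (hr : r < (c :: w).length),
        ¬ acc (dstar δ q ((c :: w).take r)) ((c :: w).get ⟨r, hr⟩) := by
      intro r hr ha
      rcases r with _ | i
      · exact hnacc ha
      · have hi : i < w.length := by simpa using hr
        rw [List.take_succ_cons] at ha
        exact hw i hi ha
  · -- not in accFrom acc
    intro hmem
    obtain ⟨n, hn, ha⟩ := hmem u.length
    rw [show n = u.length + (n - u.length) from by omega, hrun,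
      hsval _ (Nat.mod_lt _ hp)] at ha
    exact hcyc _ (Nat.mod_lt _ hp) ha
  · -- in accFrom acc' for any acc' with acc' q c
    intro acc' hacc' N
    refine ⟨u.length + (c :: w).length * N, by nlinarith [hp], ?_⟩
    rw [hrun, hsval _ (Nat.mod_lt _ hp)]
    have h0 : ((c :: w).length * N) % (c :: w).length = 0 := Nat.mul_mod_right _ _
    have ht : (c :: w).take (((c :: w).length * N) % (c :: w).length) = [] := by rw [h0]; rfl
    have hg : (c :: w).get ⟨((c :: w).length * N) % (c :: w).length, Nat.mod_lt _ hp⟩ = c := by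
      have e : (⟨((c :: w).length * N) % (c :: w).length, Nat.mod_lt _ hp⟩ :
          Fin (c :: w).length) = ⟨0, hp⟩ := Fin.ext h0
      rw [e]; rfl
    rw [ht, hg]
    exact hacc'

end Helpers

/-- existence and uniqueness of the saturation of a DBA, together with its
characterization: the saturated Büchi transitions are exactly those not lying in any
strongly connected component of the graph obtained by removing the α-transitions (i.e.,
those transitions `(q,c)` that do not lie on an α-free cycle). -/
theorem stmt4 {C Q : Type} [Fintype Q] (qinit : Q) (δ : Q → C → Q) (acc : Q → C → Prop)
    (hreach : ∀ q : Q, ∃ w : List C, dstar δ qinit w = q) :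
    let accsat : Q → C → Prop := fun q c =>
      acc q c ∨ ¬ ∃ w : List C, w ∈ safeWords δ acc (δ q c) ∧ dstar δ (δ q c) w = q
    (∀ q c, acc q c → accsat q c) ∧
    accFrom δ accsat qinit = accFrom δ acc qinit ∧
    Saturated δ accsat qinit ∧
    ∀ acc' : Q → C → Prop, (∀ q c, acc q c → acc' q c) →
      accFrom δ acc' qinit = accFrom δ acc qinit → Saturated δ acc' qinit →
        acc' = accsat := by
  intro accsat
  have hsub : ∀ q c, acc q c → accsat q c := fun q c h => Or.inl h
  have hlang : accFrom δ accsat qinit = accFrom δ acc qinit :=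
    Set.Subset.antisymm (accsat_sub δ acc qinit) (accFrom_mono δ hsub qinit)
  have hwitness : ∀ (acc' : Q → C → Prop) (q : Q) (c : C), acc' q c → ¬ accsat q c →
      accFrom δ acc' qinit = accFrom δ acc qinit → False := by
    intro acc' q c hqc hnsat hlang'
    have hnacc : ¬ acc q c := fun h => hnsat (Or.inl h)
    have hex : ∃ w, w ∈ safeWords δ acc (δ q c) ∧ dstar δ (δ q c) w = q := by
      by_contra h; exact hnsat (Or.inr h)
    obtain ⟨w, hw, hwret⟩ := hex
    obtain ⟨u, hu⟩ := hreach q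
    obtain ⟨sW, hsW1, hsW2⟩ := periodic_witness δ acc qinit q c u w hu hw hwret hnacc
    have h1 : sW ∈ accFrom δ acc' qinit := hsW2 acc' hqc
    rw [hlang'] at h1
    exact hsW1 h1
  refine ⟨hsub, hlang, ?_, ?_⟩
  · -- saturation
    intro acc' hge hne hlang'
    have hdiff : ∃ q c, acc' q c ∧ ¬ accsat q c := by
      by_contra h
      push_neg at h
      exact hne (funext fun q => funext fun c =>
        propext ⟨fun h' => h q c h', hge q c⟩)
    obtain ⟨q, c, hqc, hnsat⟩ := hdiff
    exact hwitness acc' q c hqc hnsat (hlang'.trans hlang)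
  · -- uniqueness
    intro acc' hge hlang' hsat'
    have hsub' : ∀ q c, acc' q c → accsat q c := by
      intro q c hqc
      by_contra hnsat
      exact hwitness acc' q c hqc hnsat hlang'
    by_contra hne
    exact hsat' accsat hsub' (fun h => hne h.symm) (hlang.trans hlang'.symm)
end

section
/- If an objective W ⊆ C^ω is half-positional over finite one-player arenas and is ω-regular, then its prefix preorder is total: for all finite words w₁, w₂, either every winning continuation of w₁ is a winning continuation of w₂, or vice versa. -/
/-- Concatenate a finite word in front of an infinite word. -/
def extWord {C : Type} (w : List C) (s : ℕ → C) : ℕ → C :=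
  fun n => if h : n < w.length then w.get ⟨n, h⟩ else s (n - w.length)

/-- Winning continuations `w⁻¹W` of a finite word `w` w.r.t. objective `W`. -/
def winCont {C : Type} (W : Set (ℕ → C)) (w : List C) : Set (ℕ → C) :=
  {s | extWord w s ∈ W}

/-- Acceptance by a nondeterministic Büchi automaton (transition-based). -/
def NBAAccepts {C Q : Type} (init : Set Q) (Δ : Q → C → Q → Prop)
    (acc : Q → C → Q → Prop) (s : ℕ → C) : Prop :=
  ∃ ρ : ℕ → Q, ρ 0 ∈ init ∧ (∀ n, Δ (ρ n) (s n) (ρ (n + 1))) ∧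
    ∀ N, ∃ n ≥ N, acc (ρ n) (s n) (ρ (n + 1))

/-- An objective is ω-regular if it is recognized by some nondeterministic Büchi automaton. -/
def OmegaRegular {C : Type} (W : Set (ℕ → C)) : Prop :=
  ∃ (Q : Type) (_ : Fintype Q) (init : Set Q) (Δ acc : Q → C → Q → Prop),
    (∀ q c q', acc q c q' → Δ q c q') ∧ W = {s | NBAAccepts init Δ acc s}

universe u

/-- An infinite play in an arena with edge set `E`. -/
def IsPlay {C : Type} {V : Type u} (E : Set (V × C × V)) (p : ℕ → V) (col : ℕ → C) : Prop :=
  ∀ n, (p n, col n, p (n + 1)) ∈ E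

/-- A strategy of Player 1: from a history and the current vertex, choose a colored edge. -/
def Strat (C : Type) (V : Type u) : Type u := List (V × C) → V → C × V

/-- The history (sequence of visited vertices with emitted colors) after `n` steps. -/
def histPref {C : Type} {V : Type u} (p : ℕ → V) (col : ℕ → C) (n : ℕ) : List (V × C) :=
  (List.range n).map fun i => (p i, col i)

/-- A strategy is valid if it always picks actual edges at Player-1 vertices. -/
def ValidStrat {C : Type} {V : Type u} (E : Set (V × C × V)) (own1 : V → Prop)
    (σ : Strat C V) : Prop :=
  ∀ h v, own1 v → (v, (σ h v).1, (σ h v).2) ∈ E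

/-- A play is consistent with strategy `σ` if `σ`'s choices are followed at Player-1 vertices. -/
def ConsistentPlay {C : Type} {V : Type u} (own1 : V → Prop) (σ : Strat C V)
    (p : ℕ → V) (col : ℕ → C) : Prop :=
  ∀ n, own1 (p n) → (col n, p (n + 1)) = σ (histPref p col n) (p n)

/-- `σ` is winning from `v` for objective `W`. -/
def WinningFrom {C : Type} {V : Type u} (W : Set (ℕ → C)) (E : Set (V × C × V))
    (own1 : V → Prop) (σ : Strat C V) (v : V) : Prop :=
  ∀ p col, IsPlay E p col → p 0 = v → ConsistentPlay own1 σ p col → col ∈ W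

/-- A positional strategy only depends on the current vertex. -/
def PositionalStrat {C : Type} {V : Type u} (σ : Strat C V) : Prop :=
  ∀ h h' v, σ h v = σ h' v

/-- Player 1 has a single positional strategy, optimal in the arena `(E, own1)`. -/
def HalfPosArena {C : Type} {V : Type u} (W : Set (ℕ → C)) (E : Set (V × C × V))
    (own1 : V → Prop) : Prop :=
  ∃ σ : Strat C V, ValidStrat E own1 σ ∧ PositionalStrat σ ∧
    ∀ v, (∃ τ : Strat C V, ValidStrat E own1 τ ∧ WinningFrom W E own1 τ v) →
      WinningFrom W E own1 σ v

/-- Half-positionality over all (non-blocking) arenas of any cardinality. -/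
def HalfPositionalAll {C : Type} (W : Set (ℕ → C)) : Prop :=
  ∀ (V : Type u) (E : Set (V × C × V)) (own1 : V → Prop),
    (∀ v, ∃ c v', (v, c, v') ∈ E) → HalfPosArena W E own1

/-- Half-positionality over finite one-player (all vertices to Player 1) arenas. -/
def HalfPosFinOnePlayer {C : Type} (W : Set (ℕ → C)) : Prop :=
  ∀ (V : Type) [Fintype V] (E : Set (V × C × V)),
    (∀ v, ∃ c v', (v, c, v') ∈ E) → HalfPosArena W E (fun _ => True)

/-!
Suppose `s₁ ∈ w₁⁻¹W \ w₂⁻¹W` and `s₂ ∈ w₂⁻¹W \ w₁⁻¹W`. Fix a Büchi automaton for `W`; the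
profile of a finite word records between which states it has a run, and a run through an
accepting transition. Ramsey's theorem factorises `s` into a prefix followed by blocks that all
have one idempotent profile, and acceptance of `w s` only depends on these profiles. So `s` may be
replaced by an ultimately periodic word `u x^ω` without changing whether `w₁ s` and `w₂ s` lie
in `W`.

With ultimately periodic `y₁, y₂` in place of `s₁, s₂`, consider the finite one-player arena
where paths spelling `w₁` and `w₂` lead to a common vertex, from which Player 1 enters a lasso
spelling `y₁` or one spelling `y₂`. Player 1 wins from the start of `w₁` and from the start of
`w₂`, but a positional strategy picks the same lasso for both, while `w₂ y₁ ∉ W` and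
`w₁ y₂ ∉ W`.
-/

open Filter

theorem exists_strictMono_forall_lt_eq {F : Type*} [Finite F] (c : ℕ → ℕ → F) :
    ∃ g : ℕ → ℕ, StrictMono g ∧ ∃ e, ∀ i j, i < j → c (g i) (g j) = e := by
  have step : ∀ P : ℕ → Prop, (∃ᶠ n in atTop, P n) →
      ∃ a y, P a ∧ ∃ᶠ n in atTop, P n ∧ a < n ∧ c a n = y := by
    intro P hP
    obtain ⟨a, -, ha⟩ := hP.forall_exists_of_atTop 0
    have : ∃ᶠ n in atTop, ∃ y, P n ∧ c a n = y := hP.mono fun n hn => ⟨_, hn, rfl⟩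
    obtain ⟨y, hy⟩ := frequently_exists.mp this
    exact ⟨a, y, ha, (hy.and_eventually (eventually_gt_atTop a)).mono
      fun n ⟨⟨hPn, hc⟩, hn⟩ => ⟨hPn, hn, hc⟩⟩
  have : Nonempty F := ⟨c 0 0⟩
  choose! a y ha hy using step
  let next (P : ℕ → Prop) (n : ℕ) : Prop := P n ∧ a P < n ∧ c (a P) n = y P
  let T (k : ℕ) : ℕ → Prop := next^[k] fun _ => True
  have hT_succ (k : ℕ) : T (k + 1) = next (T k) := Function.iterate_succ_apply' ..
  have hT_freq (k : ℕ) : ∃ᶠ n in atTop, T k n := by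
    induction k with
    | zero => exact frequently_atTop.mpr fun n => ⟨n, le_rfl, trivial⟩
    | succ k ih => rw [hT_succ]; exact hy _ ih
  have hT_anti (k d n : ℕ) (hn : T (k + d) n) : T k n := by
    induction d with
    | zero => exact hn
    | succ d ih => rw [← add_assoc, hT_succ] at hn; exact ih hn.1
  have key (k l : ℕ) (hkl : k < l) : a (T k) < a (T l) ∧ c (a (T k)) (a (T l)) = y (T k) := by
    obtain ⟨d, rfl⟩ := Nat.exists_eq_add_of_le hkl
    have := hT_anti (k + 1) d _ (ha _ (hT_freq (k + 1 + d)))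
    rw [hT_succ] at this
    exact this.2
  obtain ⟨e, he⟩ : ∃ e, ∃ᶠ k in atTop, y (T k) = e :=
    frequently_exists.mp (Frequently.of_forall fun k => ⟨y (T k), rfl⟩)
  obtain ⟨φ, hφ, hφe⟩ := extraction_of_frequently_atTop he
  exact ⟨fun i => a (T (φ i)), fun i j hij => (key _ _ (hφ hij)).1, e,
    fun i j hij => (key _ _ (hφ hij)).2.trans (hφe i)⟩

theorem StrictMono.exists_mem_Ico {M : ℕ → ℕ} (hM : StrictMono M) (hM0 : M 0 = 0) (n : ℕ) :
    ∃ k, n ∈ Set.Ico (M k) (M (k + 1)) := by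
  have hex : ∃ k, n < M (k + 1) := ⟨n, (Nat.lt_succ_self n).trans_le (hM.id_le _)⟩
  refine ⟨Nat.find hex, ?_, Nat.find_spec hex⟩
  rcases h : Nat.find hex with _ | k
  · exact hM0.symm ▸ Nat.zero_le n
  · exact not_lt.mp (Nat.find_min hex (h ▸ Nat.lt_succ_self k))

theorem StrictMono.eq_of_mem_Ico {M : ℕ → ℕ} (hM : StrictMono M) {j k n : ℕ}
    (hj : n ∈ Set.Ico (M j) (M (j + 1))) (hk : n ∈ Set.Ico (M k) (M (k + 1))) : j = k := by
  have := hM.lt_iff_lt.mp (hj.1.trans_lt hk.2)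
  have := hM.lt_iff_lt.mp (hk.1.trans_lt hj.2)
  omega

theorem StrictMono.exists_forall_eqOn_Icc {α : Type*} {M : ℕ → ℕ} (hM : StrictMono M)
    (hM0 : M 0 = 0) (r : ℕ → ℕ → α) (hr : ∀ k, r k (M (k + 1)) = r (k + 1) (M (k + 1))) :
    ∃ ρ : ℕ → α, ∀ k, Set.EqOn ρ (r k) (Set.Icc (M k) (M (k + 1))) := by
  choose blk hblk using hM.exists_mem_Ico hM0
  refine ⟨fun n => r (blk n) n, fun k n ⟨hkn, hnk⟩ => ?_⟩
  show r (blk n) n = r k n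
  rcases hnk.lt_or_eq with hnk | rfl
  · rw [hM.eq_of_mem_Ico (hblk n) ⟨hkn, hnk⟩]
  · rw [hM.eq_of_mem_Ico (hblk _) ⟨le_rfl, hM (Nat.lt_succ_self _)⟩, hr]

theorem extWord_eq_appendStream' {C : Type} (w : List C) (s : Stream' C) :
    extWord w s = w ++ₛ s := by
  funext n
  by_cases h : n < w.length
  · simp only [extWord, h, dite_true, List.get_eq_getElem]
    exact (Stream'.get_append_left _ _ _ h).symm
  · obtain ⟨k, rfl⟩ := Nat.exists_eq_add_of_le (not_lt.mp h)
    simp only [extWord, add_lt_iff_neg_left, not_lt_zero, dite_false, Nat.add_sub_cancel_left]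
    exact (Stream'.get_append_right k w s).symm

namespace Stream'

variable {C : Type}

def extract (t : Stream' C) (a b : ℕ) : List C := (t.drop a).take (b - a)

theorem take_succ_drop (t : Stream' C) (a n : ℕ) :
    (t.drop a).take (n + 1) = t a :: (t.drop (a + 1)).take n := by
  rw [take_succ, tail_drop', head_drop]
  rfl

theorem take_append_extract (t : Stream' C) {a b : ℕ} (h : a ≤ b) :
    t.take a ++ t.extract a b = t.take b := by
  rw [extract, ← take_add, Nat.add_sub_cancel' h]

theorem extract_append_extract (t : Stream' C) {a b c : ℕ} (hab : a ≤ b) (hbc : b ≤ c) :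
    t.extract a b ++ t.extract b c = t.extract a c := by
  rw [extract, extract, extract, show c - a = (b - a) + (c - b) by omega, take_add, drop_drop,
    Nat.add_sub_cancel' hab]

theorem extract_append_stream (w : List C) (s : Stream' C) (a b : ℕ) :
    (w ++ₛ s).extract (w.length + a) (w.length + b) = s.extract a b := by
  rw [extract, extract, ← drop_drop, drop_append_stream, Nat.add_sub_add_left]

theorem drop_mul_length_cycle (x : List C) (hx : x ≠ []) (k : ℕ) :
    (cycle x hx).drop (k * x.length) = cycle x hx := by
  induction k with
  | zero => rw [Nat.zero_mul]; rfl
  | succ k ih =>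
    rw [Nat.succ_mul, ← drop_drop, ih]
    conv_lhs => rw [cycle_eq]
    exact drop_append_stream _ _

theorem take_length_add_cycle (x : List C) (hx : x ≠ []) (n : ℕ) :
    (cycle x hx).take (x.length + n) = x ++ (cycle x hx).take n := by
  conv_lhs => rw [cycle_eq]
  exact (append_take ..).symm

theorem extract_cycle (x : List C) (hx : x ≠ []) (k l : ℕ) :
    (cycle x hx).extract (k * x.length) (l * x.length) =
      (cycle x hx).take ((l - k) * x.length) := by
  rw [extract, drop_mul_length_cycle, Nat.sub_mul]

theorem finite_range_drop_append_cycle (u x : List C) (hx : x ≠ []) :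
    (Set.range fun n => (u ++ₛ cycle x hx).drop n).Finite := by
  set y := u ++ₛ cycle x hx
  have hper (n : ℕ) : y.drop (u.length + (x.length + n)) = y.drop (u.length + n) := by
    have hcycle : (cycle x hx).drop x.length = cycle x hx := by
      simpa using drop_mul_length_cycle x hx 1
    rw [← drop_drop _ u.length, ← drop_drop n u.length, drop_append_stream, ← drop_drop n,
      hcycle]
  refine (Set.finite_lt_nat (u.length + x.length)).image (fun n => y.drop n) |>.subset ?_
  rintro _ ⟨n, rfl⟩
  induction n using Nat.strong_induction_on with
  | _ n ih =>
    by_cases hn : n < u.length + x.length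
    · exact ⟨n, hn, rfl⟩
    · obtain ⟨m, rfl⟩ := Nat.exists_eq_add_of_le (not_lt.mp hn)
      have hx₀ : 0 < x.length := List.length_pos_iff.mpr hx
      show y.drop (u.length + x.length + m) ∈ _
      rw [add_assoc, hper]
      exact ih (u.length + m) (by omega)

end Stream'

section Automaton

variable {C Q : Type} (Δ acc : Q → C → Q → Prop)

/-- A run on `u` from `q` to `q'`; with `b = true` it must take an accepting transition, with
`b = false` nothing is required of it. -/
inductive NBAPath : Q → List C → Q → Bool → Prop
  | nil (q : Q) : NBAPath q [] q false
  | cons {q p q' : Q} {c : C} {u : List C} {b : Bool} :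
      Δ q c p → NBAPath p u q' b → NBAPath q (c :: u) q' b
  | cons_acc {q p q' : Q} {c : C} {u : List C} {b : Bool} :
      Δ q c p → acc q c p → NBAPath p u q' b → NBAPath q (c :: u) q' true

def nbaProfile (u : List C) : Q → Q → Bool → Prop := fun q q' b => NBAPath Δ acc q u q' b

variable {Δ acc}

theorem nbaPath_append {q q' : Q} {u v : List C} {b : Bool} :
    NBAPath Δ acc q (u ++ v) q' b ↔
      ∃ p b₁ b₂, NBAPath Δ acc q u p b₁ ∧ NBAPath Δ acc p v q' b₂ ∧
        b = (b₁ || b₂) := by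
  constructor
  · induction u generalizing q b with
    | nil => exact fun h => ⟨q, false, b, .nil q, h, rfl⟩
    | cons c u ih =>
      intro h
      rw [List.cons_append] at h
      rcases h with _ | ⟨hΔ, h⟩ | ⟨hΔ, hacc, h⟩
      · obtain ⟨p, b₁, b₂, h₁, h₂, rfl⟩ := ih h
        exact ⟨p, b₁, b₂, .cons hΔ h₁, h₂, rfl⟩
      · obtain ⟨p, b₁, b₂, h₁, h₂, -⟩ := ih h
        exact ⟨p, true, b₂, .cons_acc hΔ hacc h₁, h₂, rfl⟩
  · rintro ⟨p, b₁, b₂, h₁, h₂, rfl⟩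
    induction h₁ with
    | nil => exact h₂
    | cons hΔ _ ih => exact .cons hΔ (ih h₂)
    | cons_acc hΔ hacc _ ih => exact .cons_acc hΔ hacc (ih h₂)

theorem nbaProfile_append_congr {u u' v v' : List C}
    (hu : nbaProfile Δ acc u = nbaProfile Δ acc u')
    (hv : nbaProfile Δ acc v = nbaProfile Δ acc v') :
    nbaProfile Δ acc (u ++ v) = nbaProfile Δ acc (u' ++ v') := by
  funext q q' b
  have hu' (p b₁) : NBAPath Δ acc q u p b₁ = NBAPath Δ acc q u' p b₁ :=
    congrFun₃ hu q p b₁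
  have hv' (p b₂) : NBAPath Δ acc p v q' b₂ = NBAPath Δ acc p v' q' b₂ :=
    congrFun₃ hv p q' b₂
  simp only [nbaProfile, nbaPath_append, hu', hv']

theorem NBAPath.exists_run {t : Stream' C} {a n : ℕ} {q q' : Q} {b : Bool}
    (h : NBAPath Δ acc q ((t.drop a).take n) q' b) :
    ∃ r : ℕ → Q, r a = q ∧ r (a + n) = q' ∧
      (∀ i, a ≤ i → i < a + n → Δ (r i) (t i) (r (i + 1))) ∧
      (b = true → ∃ i, a ≤ i ∧ i < a + n ∧ acc (r i) (t i) (r (i + 1))) := by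
  induction n generalizing a q b with
  | zero =>
    cases h
    exact ⟨fun _ => _, rfl, rfl, fun i h h' => by omega, nofun⟩
  | succ n ih =>
    rw [Stream'.take_succ_drop] at h
    obtain ⟨p, b', hΔ, hrest, hb⟩ : ∃ p b', Δ q (t a) p ∧
        NBAPath Δ acc p ((t.drop (a + 1)).take n) q' b' ∧
        (b = true → acc q (t a) p ∨ b' = true) := by
      rcases h with _ | ⟨hΔ, h⟩ | ⟨hΔ, hacc, h⟩
      · exact ⟨_, b, hΔ, h, Or.inr⟩
      · exact ⟨_, _, hΔ, h, fun _ => Or.inl hacc⟩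
    obtain ⟨r, rfl, hrn, hrΔ, hracc⟩ := ih hrest
    have hr (i : ℕ) (hi : a < i) : Function.update r a q i = r i :=
      Function.update_of_ne (by omega) _ _
    refine ⟨Function.update r a q, Function.update_self ..,
      by rw [hr _ (by omega), ← hrn, add_comm n 1, add_assoc], fun i hai hin => ?_,
      fun hb' => ?_⟩
    · rw [hr (i + 1) (by omega)]
      rcases hai.eq_or_lt with rfl | hai
      · rwa [Function.update_self]
      · rw [hr i hai]
        exact hrΔ i hai (by omega)
    · rcases hb hb' with hacc | hb'
      · exact ⟨a, le_rfl, by omega, by rwa [Function.update_self, hr _ (by omega)]⟩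
      · obtain ⟨i, hai, hin, hacc⟩ := hracc hb'
        exact ⟨i, by omega, by omega, by rwa [hr i (by omega), hr (i + 1) (by omega)]⟩

theorem nbaPath_of_run {t : Stream' C} {a n : ℕ} {r : ℕ → Q} {b : Bool}
    (hΔ : ∀ i, a ≤ i → i < a + n → Δ (r i) (t i) (r (i + 1)))
    (hacc : b = true → ∃ i, a ≤ i ∧ i < a + n ∧ acc (r i) (t i) (r (i + 1))) :
    NBAPath Δ acc (r a) ((t.drop a).take n) (r (a + n)) b := by
  induction n generalizing a b with
  | zero =>
    cases b
    · exact .nil _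
    · obtain ⟨i, h, h', -⟩ := hacc rfl
      omega
  | succ n ih =>
    rw [Stream'.take_succ_drop, show a + (n + 1) = a + 1 + n by omega]
    have hrest (b' : Bool) (hb' : b' = true → ∃ i, a + 1 ≤ i ∧ i < a + 1 + n ∧
        acc (r i) (t i) (r (i + 1))) :
        NBAPath Δ acc (r (a + 1)) ((t.drop (a + 1)).take n) (r (a + 1 + n)) b' :=
      ih (fun i h h' => hΔ i (by omega) (by omega)) hb'
    have hΔa := hΔ a le_rfl (by omega)
    by_cases hacca : acc (r a) (t a) (r (a + 1))
    · cases b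
      · exact .cons hΔa (hrest false nofun)
      · exact .cons_acc hΔa hacca (hrest false nofun)
    · refine .cons hΔa (hrest b fun hb => ?_)
      obtain ⟨i, hai, hin, hacci⟩ := hacc hb
      rcases hai.eq_or_lt with rfl | hai
      · exact absurd hacci hacca
      · exact ⟨i, hai, by omega, hacci⟩

end Automaton

section Acceptance

variable {C Q : Type} {init : Set Q} {Δ acc : Q → C → Q → Prop}

theorem nbaAccepts_of_nbaPath {t : Stream' C} {M : ℕ → ℕ} (hM : StrictMono M) (hM0 : M 0 = 0)
    {σ : ℕ → Q} {b : ℕ → Bool} (hσ₀ : σ 0 ∈ init)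
    (hpath : ∀ k, NBAPath Δ acc (σ k) (t.extract (M k) (M (k + 1))) (σ (k + 1)) (b k))
    (hb : ∃ᶠ k in atTop, b k = true) :
    NBAAccepts init Δ acc t := by
  have hlen (k : ℕ) : M k + (M (k + 1) - M k) = M (k + 1) :=
    Nat.add_sub_cancel' (hM (Nat.lt_succ_self k)).le
  choose r hr₀ hr₁ hrΔ hracc using fun k => (hpath k).exists_run
  simp only [hlen] at hr₁ hrΔ hracc
  obtain ⟨ρ, hρ⟩ :=
    hM.exists_forall_eqOn_Icc hM0 r fun k => (hr₁ k).trans (hr₀ (k + 1)).symm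
  refine ⟨ρ, ?_, fun n => ?_, fun K => ?_⟩
  · have := hr₀ 0
    rw [hM0] at this
    rwa [hρ 0 ⟨hM0.le, Nat.zero_le _⟩, this]
  · obtain ⟨k, h₁, h₂⟩ := hM.exists_mem_Ico hM0 n
    rw [hρ _ ⟨h₁, h₂.le⟩, hρ _ ⟨by omega, h₂⟩]
    exact hrΔ _ n h₁ h₂
  · obtain ⟨k, hKk, hk⟩ := hb.forall_exists_of_atTop K
    obtain ⟨i, h₁, h₂, hacc⟩ := hracc k hk
    refine ⟨i, (hKk.trans (hM.id_le k)).trans h₁, ?_⟩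
    rwa [hρ k ⟨h₁, h₂.le⟩, hρ k ⟨by omega, h₂⟩]

theorem NBAAccepts.exists_nbaPath [Finite Q] {t : Stream' C} {N : ℕ → ℕ} (hN : StrictMono N)
    (h : NBAAccepts init Δ acc t) :
    ∃ q₀ ∈ init, ∃ q k l, k < l ∧ NBAPath Δ acc q₀ (t.take (N k)) q false ∧
      NBAPath Δ acc q (t.extract (N k) (N l)) q true := by
  obtain ⟨ρ, hρ₀, hρΔ, hρacc⟩ := h
  obtain ⟨q, hq⟩ : ∃ q, ∃ᶠ k in atTop, ρ (N k) = q :=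
    frequently_exists.mp (Frequently.of_forall fun k => ⟨_, rfl⟩)
  obtain ⟨k, -, rfl⟩ := hq.forall_exists_of_atTop 0
  obtain ⟨p, hkp, hp⟩ := hρacc (N k)
  obtain ⟨l, hpl, hl⟩ := hq.forall_exists_of_atTop (p + 1)
  have hNl : p < N l := hpl.trans (hN.id_le l)
  refine ⟨ρ 0, hρ₀, ρ (N k), k, l, hN.lt_iff_lt.mp (by omega), ?_, ?_⟩
  · simpa using nbaPath_of_run (t := t) (a := 0) (n := N k) (b := false)
      (fun i _ _ => hρΔ i) nofun
  · have := nbaPath_of_run (t := t) (a := N k) (n := N l - N k) (b := true) (fun i _ _ => hρΔ i)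
      fun _ => ⟨p, hkp, by omega, hp⟩
    rwa [Nat.add_sub_cancel' (by omega), hl] at this

theorem nbaAccepts_iff_of_nbaProfile [Finite Q] {t : Stream' C} {N : ℕ → ℕ}
    (hN : StrictMono N) (hN0 : 0 < N 0) {m e : Q → Q → Bool → Prop}
    (hm : ∀ k, nbaProfile Δ acc (t.take (N k)) = m)
    (he : ∀ k l, k < l → nbaProfile Δ acc (t.extract (N k) (N l)) = e) :
    NBAAccepts init Δ acc t ↔ ∃ q₀ ∈ init, ∃ q, m q₀ q false ∧ e q q true := by
  constructor
  · intro h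
    obtain ⟨q₀, hq₀, q, k, l, hkl, h₁, h₂⟩ := h.exists_nbaPath hN
    exact ⟨q₀, hq₀, q, hm k ▸ h₁, he k l hkl ▸ h₂⟩
  · rintro ⟨q₀, hq₀, q, h₁, h₂⟩
    refine nbaAccepts_of_nbaPath (M := fun | 0 => 0 | k + 1 => N k)
      (σ := fun | 0 => q₀ | _ + 1 => q) (b := fun | 0 => false | _ + 1 => true)
      ?_ rfl hq₀ ?_ ?_
    · exact strictMono_nat_of_lt_succ fun | 0 => hN0 | k + 1 => hN (Nat.lt_succ_self k)
    · rintro (_ | k)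
      · show nbaProfile Δ acc (t.take (N 0)) q₀ q false
        rwa [hm 0]
      · show nbaProfile Δ acc (t.extract (N k) (N (k + 1))) q q true
        rwa [he k (k + 1) (Nat.lt_succ_self k)]
    · exact (eventually_gt_atTop 0).frequently.mono fun | k + 1, _ => rfl

end Acceptance

section Pumping

variable {C Q : Type} {init : Set Q} {Δ acc : Q → C → Q → Prop}

theorem nbaProfile_take_cycle (x : List C) (hx : x ≠ [])
    (hxx : nbaProfile Δ acc (x ++ x) = nbaProfile Δ acc x) (j : ℕ) :
    nbaProfile Δ acc ((Stream'.cycle x hx).take ((j + 1) * x.length)) = nbaProfile Δ acc x := by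
  induction j with
  | zero =>
    rw [zero_add, one_mul, ← add_zero x.length, Stream'.take_length_add_cycle, Stream'.take_zero,
      List.append_nil]
  | succ j ih =>
    rw [Nat.succ_mul, add_comm, Stream'.take_length_add_cycle, ← hxx]
    exact nbaProfile_append_congr rfl ih

theorem nbaAccepts_append_cycle_iff [Finite Q] (w u x : List C) (hx : x ≠ [])
    {m e : Q → Q → Bool → Prop} (hxe : nbaProfile Δ acc x = e)
    (hxx : nbaProfile Δ acc (x ++ x) = e) (hm : nbaProfile Δ acc (w ++ (u ++ x)) = m) :
    NBAAccepts init Δ acc (w ++ₛ (u ++ₛ Stream'.cycle x hx)) ↔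
      ∃ q₀ ∈ init, ∃ q, m q₀ q false ∧ e q q true := by
  subst hxe hm
  have hx₀ : 0 < x.length := List.length_pos_iff.mpr hx
  refine nbaAccepts_iff_of_nbaProfile (N := fun k => w.length + (u.length + (k + 1) * x.length))
    (fun k l hkl => ?_) (by simp only [zero_add, one_mul]; omega) (fun k => ?_) (fun k l hkl => ?_)
  · have : (k + 1) * x.length < (l + 1) * x.length := Nat.mul_lt_mul_of_pos_right (by omega) hx₀
    simp only
    omega
  · rw [← Stream'.append_take, ← Stream'.append_take]
    exact nbaProfile_append_congr rfl
      (nbaProfile_append_congr rfl (nbaProfile_take_cycle x hx hxx k))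
  · rw [Stream'.extract_append_stream, Stream'.extract_append_stream, Stream'.extract_cycle,
      show l + 1 - (k + 1) = l - k - 1 + 1 by omega, nbaProfile_take_cycle x hx hxx]

theorem nbaAccepts_append_iff_of_strictMono [Finite Q] (w : List C) (s : Stream' C)
    {g : ℕ → ℕ} (hg : StrictMono g) {m e : Q → Q → Bool → Prop}
    (hm : ∀ i, nbaProfile Δ acc (w ++ s.take (g i)) = m)
    (he : ∀ i j, i < j → nbaProfile Δ acc (s.extract (g i) (g j)) = e) :
    NBAAccepts init Δ acc (w ++ₛ s) ↔
      ∃ q₀ ∈ init, ∃ q, m q₀ q false ∧ e q q true := by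
  have := hg (Nat.zero_lt_one)
  refine nbaAccepts_iff_of_nbaProfile (N := fun k => w.length + g (k + 1))
    (fun k l hkl => Nat.add_lt_add_left (hg (Nat.succ_lt_succ hkl)) _)
    (show 0 < w.length + g 1 by omega) (fun k => ?_) (fun k l hkl => ?_)
  · rw [← Stream'.append_take]
    exact hm (k + 1)
  · rw [Stream'.extract_append_stream]
    exact he _ _ (Nat.succ_lt_succ hkl)

theorem OmegaRegular.exists_append_cycle_iff {W : Set (ℕ → C)} (hreg : OmegaRegular W)
    {P : Set (List C)} (hP : P.Finite) (s : Stream' C) :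
    ∃ (u x : List C) (hx : x ≠ []), ∀ w ∈ P,
      (extWord w s ∈ W ↔ extWord w (u ++ₛ Stream'.cycle x hx) ∈ W) := by
  obtain ⟨Q, _, init, Δ, acc, -, rfl⟩ := hreg
  have := hP.to_subtype
  obtain ⟨g, hg, ⟨e, m⟩, hE⟩ := exists_strictMono_forall_lt_eq fun i j =>
    (nbaProfile Δ acc (s.extract i j), fun w : P => nbaProfile Δ acc (w ++ s.take i))
  have he (i j : ℕ) (hij : i < j) : nbaProfile Δ acc (s.extract (g i) (g j)) = e :=
    congrArg Prod.fst (hE i j hij)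
  have hm (w : P) (i : ℕ) : nbaProfile Δ acc (w ++ s.take (g i)) = m w :=
    congrArg (fun c => c.2 w) (hE i (i + 1) (Nat.lt_succ_self i))
  have hg₀₁ := hg (Nat.zero_lt_one)
  have hx : s.extract (g 0) (g 1) ≠ [] := by
    rw [← List.length_pos_iff, Stream'.extract, Stream'.length_take]
    omega
  have hxx : nbaProfile Δ acc (s.extract (g 0) (g 1) ++ s.extract (g 0) (g 1)) = e := by
    rw [← he 0 2 (by omega),
      ← Stream'.extract_append_extract s hg₀₁.le (hg Nat.one_lt_two).le]
    exact nbaProfile_append_congr rfl ((he 0 1 Nat.zero_lt_one).trans (he 1 2 Nat.one_lt_two).symm)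
  refine ⟨s.take (g 0), s.extract (g 0) (g 1), hx, fun w hw => ?_⟩
  show NBAAccepts init Δ acc _ ↔ NBAAccepts init Δ acc _
  rw [extWord_eq_appendStream', extWord_eq_appendStream',
    nbaAccepts_append_iff_of_strictMono w s hg (hm ⟨w, hw⟩) he,
    nbaAccepts_append_cycle_iff (m := m ⟨w, hw⟩) w _ _ hx (he 0 1 Nat.zero_lt_one) hxx
      (by rw [Stream'.take_append_extract s hg₀₁.le, hm ⟨w, hw⟩ 1])]

end Pumping

section Plays

variable {C : Type} {V V' : Type*}

def playColors (h : V → C × V) (v : V) : Stream' C := fun n => (h ((Prod.snd ∘ h)^[n] v)).1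

theorem playColors_eq_cons (h : V → C × V) (v : V) :
    playColors h v = Stream'.cons (h v).1 (playColors h (h v).2) := by
  funext n
  cases n <;> rfl

theorem playColors_map (π : V → V') {h : V → C × V} {h' : V' → C × V'}
    (hπ : ∀ v, h' (π v) = ((h v).1, π (h v).2)) (v : V) :
    playColors h' (π v) = playColors h v := by
  have hsemi : Function.Semiconj π (Prod.snd ∘ h) (Prod.snd ∘ h') := fun v => by
    simp only [Function.comp, hπ]
  funext n
  simp only [playColors, (hsemi.iterate_right n v).symm, hπ]

theorem winningFrom_iff_playColors_mem {W : Set (ℕ → C)} {E : Set (V × C × V)}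
    (h : V → C × V) (hE : ∀ v, (v, h v) ∈ E) (v : V) :
    WinningFrom W E (fun _ => True) (fun _ => h) v ↔ playColors h v ∈ W := by
  constructor
  · have hstep (n : ℕ) : (Prod.snd ∘ h)^[n + 1] v = (h ((Prod.snd ∘ h)^[n] v)).2 :=
      Function.iterate_succ_apply' ..
    refine fun hwin => hwin (fun n => (Prod.snd ∘ h)^[n] v) (playColors h v) (fun n => ?_) rfl
      fun n _ => ?_
    · show ((Prod.snd ∘ h)^[n] v, (h _).1, (Prod.snd ∘ h)^[n + 1] v) ∈ E
      rw [hstep]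
      exact hE _
    · exact congrArg _ (hstep n)
  · intro hmem p col _ hp₀ hcons
    have hp (n : ℕ) : p n = (Prod.snd ∘ h)^[n] v := by
      induction n with
      | zero => exact hp₀
      | succ n ih =>
        rw [Function.iterate_succ_apply', ← ih]
        exact congrArg Prod.snd (hcons n trivial)
    have hcol : col = playColors h v := funext fun n => by
      rw [playColors, ← hp]
      exact congrArg Prod.fst (hcons n trivial)
    rwa [hcol]

end Plays

section Arena

variable {C : Type}

/-- The moves of the arena when the continuation `y` is chosen at the branching vertex `inl []`:
from `inl a` the word `a` is read on the way to `inl []`, from `inr z` the stream `z` is read. -/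
def arenaNext (y : Stream' C) : List C ⊕ Stream' C → C × (List C ⊕ Stream' C)
  | .inl (c :: a) => (c, .inl a)
  | .inl [] => (y.head, .inr y.tail)
  | .inr z => (z.head, .inr z.tail)

theorem arenaNext_eq_of_ne_inl_nil (y y' : Stream' C) {v : List C ⊕ Stream' C}
    (hv : v ≠ .inl []) : arenaNext y v = arenaNext y' v := by
  rcases v with (_ | _) | _ <;> first | exact absurd rfl hv | rfl

theorem playColors_arenaNext_inr (y z : Stream' C) : playColors (arenaNext y) (.inr z) = z := by
  funext n
  induction n generalizing z with
  | zero => rfl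
  | succ n ih => exact ih z.tail

theorem playColors_arenaNext_inl (y : Stream' C) (a : List C) :
    playColors (arenaNext y) (.inl a) = a ++ₛ y := by
  induction a with
  | nil =>
    rw [playColors_eq_cons]
    show Stream'.cons y.head (playColors (arenaNext y) (.inr y.tail)) = y
    rw [playColors_arenaNext_inr, Stream'.eta]
  | cons c a ih =>
    rw [playColors_eq_cons]
    show Stream'.cons c (playColors (arenaNext y) (.inl a)) = _
    rw [ih, Stream'.cons_append_stream]

def arenaVertices (P : Set (List C)) (Y : Set (Stream' C)) : Set (List C ⊕ Stream' C) :=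
  insert (.inl []) (Sum.inl '' (⋃ w ∈ P, {a | a <:+ w}) ∪
    Sum.inr '' (⋃ y ∈ Y, Set.range fun n => y.drop n))

theorem arenaVertices_finite {P : Set (List C)} {Y : Set (Stream' C)} (hP : P.Finite)
    (hY : Y.Finite) (hYfin : ∀ y ∈ Y, (Set.range fun n => y.drop n).Finite) :
    (arenaVertices P Y).Finite :=
  ((hP.biUnion fun w _ => (List.finite_toSet w.tails).subset fun a ha =>
    (List.mem_tails a w).mpr ha).image _ |>.union ((hY.biUnion hYfin).image _)).insert _

theorem arenaNext_mem_arenaVertices {P : Set (List C)} {Y : Set (Stream' C)} {y : Stream' C}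
    (hy : y ∈ Y) {v : List C ⊕ Stream' C} (hv : v ∈ arenaVertices P Y) :
    (arenaNext y v).2 ∈ arenaVertices P Y := by
  have hnil : (arenaNext y (.inl [])).2 ∈ arenaVertices P Y :=
    .inr (.inr ⟨y.tail, Set.mem_biUnion hy ⟨1, (Stream'.tail_eq_drop y).symm⟩, rfl⟩)
  rcases hv with rfl | ⟨a, ha, rfl⟩ | ⟨z, hz, rfl⟩
  · exact hnil
  · rcases a with _ | ⟨c, a⟩
    · exact hnil
    · obtain ⟨w, hw, hcw⟩ := Set.mem_iUnion₂.mp ha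
      exact .inr (.inl ⟨a, Set.mem_biUnion hw ((List.suffix_cons c a).trans hcw), rfl⟩)
  · obtain ⟨y', hy', n, rfl⟩ := Set.mem_iUnion₂.mp hz
    exact .inr (.inr
      ⟨(y'.drop n).tail, Set.mem_biUnion hy' ⟨n + 1, Stream'.tail_drop'.symm⟩, rfl⟩)

theorem exists_playColors_eq_arenaNext {S : Set (List C ⊕ Stream' C)} {Y : Set (Stream' C)}
    (hS : .inl [] ∈ S) (h : S → C × S)
    (hh : ∀ v : S, ∃ y ∈ Y, arenaNext y v = ((h v).1, ((h v).2 : List C ⊕ Stream' C))) :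
    ∃ y ∈ Y, ∀ v, playColors h v = playColors (arenaNext y) v := by
  obtain ⟨y, hy, hyT⟩ := hh ⟨.inl [], hS⟩
  refine ⟨y, hy, fun v => (playColors_map Subtype.val (fun v => ?_) v).symm⟩
  obtain ⟨y', -, hy'⟩ := hh v
  by_cases hv : (v : List C ⊕ Stream' C) = .inl []
  · rwa [show v = ⟨.inl [], hS⟩ from Subtype.ext hv]
  · rwa [arenaNext_eq_of_ne_inl_nil y y' hv]

theorem HalfPosFinOnePlayer.exists_uniform_continuation {W : Set (ℕ → C)}
    (hpos : HalfPosFinOnePlayer W) {P : Set (List C)} {Y : Set (Stream' C)} (hP : P.Finite)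
    (hY : Y.Finite) (hYfin : ∀ y ∈ Y, (Set.range fun n => y.drop n).Finite)
    (hYne : Y.Nonempty) :
    ∃ y ∈ Y, ∀ w ∈ P, (∃ y' ∈ Y, extWord w y' ∈ W) → extWord w y ∈ W := by
  let S := arenaVertices P Y
  have := (arenaVertices_finite hP hY hYfin).fintype
  let E : Set (S × C × S) :=
    {e | ∃ y ∈ Y, arenaNext y e.1 = (e.2.1, (e.2.2 : List C ⊕ Stream' C))}
  let restrict (y : Stream' C) (hy : y ∈ Y) (v : S) : C × S :=
    ((arenaNext y v).1, ⟨_, arenaNext_mem_arenaVertices hy v.2⟩)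
  have hrestrict (y : Stream' C) (hy : y ∈ Y) (v : S) : (v, restrict y hy v) ∈ E :=
    ⟨y, hy, rfl⟩
  obtain ⟨y₀, hy₀⟩ := hYne
  obtain ⟨σ, hσE, hσpos, hσopt⟩ := hpos S E fun v => ⟨_, _, hrestrict y₀ hy₀ v⟩
  have hσ : σ = fun _ => σ [] := funext fun l => funext (hσpos l [])
  obtain ⟨y, hy, hσy⟩ := exists_playColors_eq_arenaNext (S := S) (Set.mem_insert _ _) (σ [])
    fun v => hσE [] v trivial
  refine ⟨y, hy, fun w hw ⟨y', hy', hwin⟩ => ?_⟩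
  let vw : S := ⟨.inl w, .inr (.inl ⟨w, Set.mem_biUnion hw List.suffix_rfl, rfl⟩)⟩
  have hwin' : WinningFrom W E (fun _ => True) (fun _ => restrict y' hy') vw := by
    rw [winningFrom_iff_playColors_mem _ (hrestrict y' hy'),
      ← playColors_map (h' := arenaNext y') Subtype.val (fun _ => rfl), playColors_arenaNext_inl,
      ← extWord_eq_appendStream']
    exact hwin
  have := hσopt vw ⟨_, fun _ v _ => hrestrict y' hy' v, hwin'⟩
  rwa [hσ, winningFrom_iff_playColors_mem (σ []) fun v => hσE [] v trivial, hσy,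
    playColors_arenaNext_inl, ← extWord_eq_appendStream'] at this

end Arena

/-- an ω-regular objective that is half-positional over finite one-player
arenas has a total prefix preorder. -/
theorem stmt7 {C : Type} (W : Set (ℕ → C))
    (hreg : OmegaRegular W) (hpos : HalfPosFinOnePlayer W) :
    ∀ w₁ w₂ : List C, winCont W w₁ ⊆ winCont W w₂ ∨ winCont W w₂ ⊆ winCont W w₁ := by
  intro w₁ w₂
  by_contra! h
  obtain ⟨⟨s₁, hs₁, hs₁'⟩, ⟨s₂, hs₂, hs₂'⟩⟩ :=
    And.imp Set.not_subset.mp Set.not_subset.mp h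
  have hP : ({w₁, w₂} : Set (List C)).Finite := Set.toFinite _
  obtain ⟨u₁, x₁, hx₁, h₁⟩ := hreg.exists_append_cycle_iff hP s₁
  obtain ⟨u₂, x₂, hx₂, h₂⟩ := hreg.exists_append_cycle_iff hP s₂
  obtain ⟨y, hy, hyw⟩ := hpos.exists_uniform_continuation hP
    (Set.toFinite {u₁ ++ₛ Stream'.cycle x₁ hx₁, u₂ ++ₛ Stream'.cycle x₂ hx₂})
    (by rintro y (rfl | rfl) <;> exact Stream'.finite_range_drop_append_cycle ..)
    (Set.insert_nonempty _ _)
  have hw₁ := hyw w₁ (by simp) ⟨_, by simp, (h₁ w₁ (by simp)).mp hs₁⟩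
  have hw₂ := hyw w₂ (by simp) ⟨_, by simp, (h₂ w₂ (by simp)).mp hs₂⟩
  rcases hy with rfl | rfl
  · exact hs₁' ((h₁ w₂ (by simp)).mpr hw₂)
  · exact hs₂' ((h₂ w₁ (by simp)).mpr hw₁)
end

section
/- If an ω-regular objective W ⊆ C^ω is half-positional over finite one-player arenas, then W is progress-consistent: for all w₁ ∈ C* and w₂ ∈ C⁺ with w₁⁻¹W ⊊ (w₁w₂)⁻¹W, the word w₁(w₂)^ω belongs to W. -/
/-- The periodic infinite word `w^ω` for a nonempty finite word `w`. -/
def periodicW {C : Type} (w : List C) (h : w ≠ []) : ℕ → C :=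
  fun n => w.get ⟨n % w.length, Nat.mod_lt n (List.length_pos_of_ne_nil h)⟩

/-- Progress-consistency: whenever `w₁ ≺ w₁w₂`, the word `w₁(w₂)^ω` is winning. -/
def ProgressConsistent {C : Type} (W : Set (ℕ → C)) : Prop :=
  ∀ (w₁ w₂ : List C) (h : w₂ ≠ []),
    winCont W w₁ ⊂ winCont W (w₁ ++ w₂) → extWord w₁ (periodicW w₂ h) ∈ W

universe u

namespace Stmt8Aux


lemma step_ex {K : Type} [Finite K] (f : ℕ → ℕ → K) (S : Set ℕ) (hS : S.Infinite) :
    ∃ T : Set ℕ, T.Infinite ∧ T ⊆ S ∧ ∀ m ∈ T, sInf S < m ∧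
      ∀ m' ∈ T, f (sInf S) m = f (sInf S) m' := by
  classical
  set a := sInf S with ha
  have hS' : {m | m ∈ S ∧ a < m}.Infinite := by
    have : {m | m ∈ S ∧ a < m} = S \ Set.Iic a := by
      ext n; simp [Set.mem_diff, not_le]
    rw [this]
    exact hS.diff (Set.finite_Iic a)
  have hcov : {m | m ∈ S ∧ a < m} = ⋃ c : K, {m | (m ∈ S ∧ a < m) ∧ f a m = c} := by
    ext n; simp
  have : ∃ c : K, {m | (m ∈ S ∧ a < m) ∧ f a m = c}.Infinite := by
    by_contra hall
    push_neg at hall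
    exact hS' (hcov ▸ Set.finite_iUnion hall)
  obtain ⟨c, hc⟩ := this
  refine ⟨_, hc, fun m hm => hm.1.1, fun m hm => ⟨hm.1.2, fun m' hm' => ?_⟩⟩
  rw [hm.2, hm'.2]

lemma ramsey_pairs {K : Type} [Finite K] (f : ℕ → ℕ → K) :
    ∃ g : ℕ → ℕ, StrictMono g ∧ 1 ≤ g 0 ∧
      ∀ i j, i < j → f (g i) (g j) = f (g 0) (g 1) := by
  classical
  -- chain of nested infinite sets
  let F : {S : Set ℕ // S.Infinite} → {S : Set ℕ // S.Infinite} := fun S =>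
    ⟨Classical.choose (step_ex f S.1 S.2), (Classical.choose_spec (step_ex f S.1 S.2)).1⟩
  let chain : ℕ → {S : Set ℕ // S.Infinite} := fun n => F^[n] ⟨Set.univ, Set.infinite_univ⟩
  have hchain : ∀ n, chain (n + 1) = F (chain n) := fun n => Function.iterate_succ_apply' _ _ _
  let a : ℕ → ℕ := fun n => sInf (chain n).1
  have hmem : ∀ n, a n ∈ (chain n).1 := fun n => Nat.sInf_mem (chain n).2.nonempty
  have hstep : ∀ n, (chain (n+1)).1 ⊆ (chain n).1 ∧
      ∀ m ∈ (chain (n+1)).1, a n < m ∧ ∀ m' ∈ (chain (n+1)).1, f (a n) m = f (a n) m' := by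
    intro n
    have h := Classical.choose_spec (step_ex f (chain n).1 (chain n).2)
    rw [hchain n]
    exact ⟨h.2.1, h.2.2⟩
  have hnested : ∀ i j, i ≤ j → (chain j).1 ⊆ (chain i).1 := by
    intro i j hij
    induction j with
    | zero => cases Nat.le_zero.mp hij; exact le_refl _
    | succ j ih =>
      rcases Nat.lt_or_ge i (j+1) with h | h
      · exact ((hstep j).1).trans (ih (Nat.lt_succ_iff.mp h))
      · cases le_antisymm hij h; exact le_refl _
  have hamono : StrictMono a := by
    apply strictMono_nat_of_lt_succ
    intro n
    exact ((hstep n).2 _ (hmem (n+1))).1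
  have hcolor : ∀ i j, i < j → f (a i) (a j) = f (a i) (a (i+1)) := by
    intro i j hij
    have hj : a j ∈ (chain (i+1)).1 := hnested _ _ hij (hmem j)
    exact ((hstep i).2 _ hj).2 _ (hmem (i+1))
  let cc : ℕ → K := fun i => f (a i) (a (i+1))
  obtain ⟨k0, hk0⟩ := Finite.exists_infinite_fiber cc
  have hinf : {i | cc i = k0}.Infinite := by
    rw [← Set.infinite_coe_iff]
    exact hk0
  let g : ℕ → ℕ := fun n => a (Nat.nth (fun i => cc i = k0) (n + 1))
  have hnth := Nat.nth_strictMono hinf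
  have hnthmem : ∀ n, cc (Nat.nth (fun i => cc i = k0) n) = k0 :=
    fun n => Nat.nth_mem_of_infinite hinf n
  have hgmono : StrictMono g := fun i j hij => hamono (hnth (by omega))
  have key : ∀ i j, i < j → f (g i) (g j) = k0 := by
    intro i j hij
    rw [hcolor _ _ (hnth (by omega : i + 1 < j + 1))]
    exact hnthmem (i+1)
  refine ⟨g, hgmono, ?_, fun i j hij => by rw [key i j hij, key 0 1 one_pos]⟩
  have h01 : Nat.nth (fun i => cc i = k0) 0 < Nat.nth (fun i => cc i = k0) 1 := hnth one_pos
  have : a 0 < a (Nat.nth (fun i => cc i = k0) 1) := hamono (by omega)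
  have h2 : g 0 = a (Nat.nth (fun i => cc i = k0) 1) := rfl
  omega



variable {C Q : Type}

/-- A run segment on positions `[i, j)` of the stream `t`. -/
def RunSeg (Δ : Q → C → Q → Prop) (t : ℕ → C) (i j : ℕ) (σ : ℕ → Q) : Prop :=
  ∀ n, i ≤ n → n < j → Δ (σ n) (t n) (σ (n + 1))

/-- Reachability profile over segment `[i, j)`. -/
def RR (Δ : Q → C → Q → Prop) (t : ℕ → C) (i j : ℕ) (q q' : Q) : Prop :=
  ∃ σ, σ i = q ∧ σ j = q' ∧ RunSeg Δ t i j σ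

/-- Reachability with an accepting transition over segment `[i, j)`. -/
def RA (Δ acc : Q → C → Q → Prop) (t : ℕ → C) (i j : ℕ) (q q' : Q) : Prop :=
  ∃ σ, σ i = q ∧ σ j = q' ∧ RunSeg Δ t i j σ ∧
    ∃ n, i ≤ n ∧ n < j ∧ acc (σ n) (t n) (σ (n + 1))

/-- An accepting infinite run on `t` starting in state `q`. -/
def AccFrom (Δ acc : Q → C → Q → Prop) (q : Q) (t : ℕ → C) : Prop :=
  ∃ ρ : ℕ → Q, ρ 0 = q ∧ (∀ n, Δ (ρ n) (t n) (ρ (n + 1))) ∧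
    ∀ N, ∃ n ≥ N, acc (ρ n) (t n) (ρ (n + 1))

lemma RA.toRR {Δ acc : Q → C → Q → Prop} {t i j q q'} (h : RA Δ acc t i j q q') :
    RR Δ t i j q q' := by
  obtain ⟨σ, h1, h2, h3, _⟩ := h
  exact ⟨σ, h1, h2, h3⟩

lemma RR_congr {Δ : Q → C → Q → Prop} {t1 t2 : ℕ → C} {i j q q'}
    (heq : ∀ n, i ≤ n → n < j → t1 n = t2 n) (h : RR Δ t1 i j q q') :
    RR Δ t2 i j q q' := by
  obtain ⟨σ, h1, h2, h3⟩ := h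
  exact ⟨σ, h1, h2, fun n hn hn' => heq n hn hn' ▸ h3 n hn hn'⟩

lemma RA_congr {Δ acc : Q → C → Q → Prop} {t1 t2 : ℕ → C} {i j q q'}
    (heq : ∀ n, i ≤ n → n < j → t1 n = t2 n) (h : RA Δ acc t1 i j q q') :
    RA Δ acc t2 i j q q' := by
  obtain ⟨σ, h1, h2, h3, n, hn1, hn2, hn3⟩ := h
  exact ⟨σ, h1, h2, fun n hn hn' => heq n hn hn' ▸ h3 n hn hn',
    n, hn1, hn2, heq n hn1 hn2 ▸ hn3⟩

lemma RR_shift {Δ : Q → C → Q → Prop} {t1 t2 : ℕ → C} {i j q q'} (d : ℕ)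
    (heq : ∀ n, i ≤ n → n < j → t1 n = t2 (n + d)) (h : RR Δ t1 i j q q') :
    RR Δ t2 (i + d) (j + d) q q' := by
  obtain ⟨σ, h1, h2, h3⟩ := h
  refine ⟨fun n => σ (n - d), by simpa using h1, by simpa using h2, fun n hn hn' => ?_⟩
  show Δ (σ (n - d)) (t2 n) (σ (n + 1 - d))
  have e1 : t2 n = t1 (n - d) := by
    have h := heq (n - d) (by omega) (by omega)
    rw [Nat.sub_add_cancel (by omega)] at h
    exact h.symm
  have e2 : n + 1 - d = (n - d) + 1 := by omega
  rw [e1, e2]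
  exact h3 (n - d) (by omega) (by omega)

lemma RA_shift {Δ acc : Q → C → Q → Prop} {t1 t2 : ℕ → C} {i j q q'} (d : ℕ)
    (heq : ∀ n, i ≤ n → n < j → t1 n = t2 (n + d)) (h : RA Δ acc t1 i j q q') :
    RA Δ acc t2 (i + d) (j + d) q q' := by
  obtain ⟨σ, h1, h2, h3, m, hm1, hm2, hm3⟩ := h
  refine ⟨fun n => σ (n - d), by simpa using h1, by simpa using h2, fun n hn hn' => ?_,
    m + d, by omega, by omega, ?_⟩
  · show Δ (σ (n - d)) (t2 n) (σ (n + 1 - d))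
    have e1 : t2 n = t1 (n - d) := by
      have h := heq (n - d) (by omega) (by omega)
      rw [Nat.sub_add_cancel (by omega)] at h
      exact h.symm
    have e2 : n + 1 - d = (n - d) + 1 := by omega
    rw [e1, e2]
    exact h3 (n - d) (by omega) (by omega)
  · show acc (σ (m + d - d)) (t2 (m + d)) (σ (m + d + 1 - d))
    have e0 : m + d - d = m := by omega
    have e1 : m + d + 1 - d = m + 1 := by omega
    rw [e0, e1, ← heq m hm1 hm2]
    exact hm3

lemma RR_unshift {Δ : Q → C → Q → Prop} {t1 t2 : ℕ → C} {i j q q'} (d : ℕ)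
    (heq : ∀ n, i ≤ n → n < j → t1 (n + d) = t2 n) (h : RR Δ t1 (i + d) (j + d) q q') :
    RR Δ t2 i j q q' := by
  obtain ⟨σ, h1, h2, h3⟩ := h
  refine ⟨fun n => σ (n + d), by simpa using h1, by simpa using h2, fun n hn hn' => ?_⟩
  show Δ (σ (n + d)) (t2 n) (σ (n + 1 + d))
  rw [← heq n hn hn', show n + 1 + d = (n + d) + 1 by omega]
  exact h3 (n + d) (by omega) (by omega)

lemma RA_unshift {Δ acc : Q → C → Q → Prop} {t1 t2 : ℕ → C} {i j q q'} (d : ℕ)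
    (heq : ∀ n, i ≤ n → n < j → t1 (n + d) = t2 n) (h : RA Δ acc t1 (i + d) (j + d) q q') :
    RA Δ acc t2 i j q q' := by
  obtain ⟨σ, h1, h2, h3, m, hm1, hm2, hm3⟩ := h
  refine ⟨fun n => σ (n + d), by simpa using h1, by simpa using h2, fun n hn hn' => ?_,
    m - d, by omega, by omega, ?_⟩
  · show Δ (σ (n + d)) (t2 n) (σ (n + 1 + d))
    rw [← heq n hn hn', show n + 1 + d = (n + d) + 1 by omega]
    exact h3 (n + d) (by omega) (by omega)
  · show acc (σ (m - d + d)) (t2 (m - d)) (σ (m - d + 1 + d))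
    have e0 : m - d + d = m := by omega
    have e1 : m - d + 1 + d = m + 1 := by omega
    rw [e0, e1, ← heq (m - d) (by omega) (by omega), e0]
    exact hm3

/-- Every `n ≥ c 0` lies in the block of the greatest cut point below it. -/
lemma block_spec (c : ℕ → ℕ) (hc : StrictMono c) (n : ℕ) (hn : c 0 ≤ n) :
    c (Nat.findGreatest (fun k => c k ≤ n) n) ≤ n ∧
      n < c (Nat.findGreatest (fun k => c k ≤ n) n + 1) ∧
      ∀ K, c K ≤ n → K ≤ Nat.findGreatest (fun k => c k ≤ n) n := by
  classical
  have hck : c (Nat.findGreatest (fun k => c k ≤ n) n) ≤ n :=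
    Nat.findGreatest_spec (P := fun k => c k ≤ n) (Nat.zero_le n) hn
  refine ⟨hck, ?_, fun K hK =>
    Nat.le_findGreatest (P := fun k => c k ≤ n) (le_trans hc.le_apply hK) hK⟩
  by_contra hcon
  push_neg at hcon
  have hk1n : Nat.findGreatest (fun k => c k ≤ n) n + 1 ≤ n := le_trans hc.le_apply hcon
  exact Nat.findGreatest_is_greatest (P := fun k => c k ≤ n)
    (Nat.lt_succ_self _) hk1n hcon

/-- Glue finite run segments along a cut sequence into an accepting infinite run. -/
lemma glue (Δ acc : Q → C → Q → Prop) (t : ℕ → C) (c : ℕ → ℕ) (hc : StrictMono c)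
    (h0 : c 0 = 0) (qs : ℕ → Q)
    (hR : ∀ k, RR Δ t (c k) (c (k + 1)) (qs k) (qs (k + 1)))
    (hA : ∀ K, ∃ k ≥ K, RA Δ acc t (c k) (c (k + 1)) (qs k) (qs (k + 1))) :
    AccFrom Δ acc (qs 0) t := by
  classical
  have Hpick : ∀ k, ∃ σ : ℕ → Q, σ (c k) = qs k ∧ σ (c (k + 1)) = qs (k + 1) ∧
      RunSeg Δ t (c k) (c (k + 1)) σ ∧
      (RA Δ acc t (c k) (c (k + 1)) (qs k) (qs (k + 1)) →
        ∃ n, c k ≤ n ∧ n < c (k + 1) ∧ acc (σ n) (t n) (σ (n + 1))) := by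
    intro k
    by_cases h : RA Δ acc t (c k) (c (k + 1)) (qs k) (qs (k + 1))
    · obtain ⟨σ, h1, h2, h3, hn⟩ := h
      exact ⟨σ, h1, h2, h3, fun _ => hn⟩
    · obtain ⟨σ, h1, h2, h3⟩ := hR k
      exact ⟨σ, h1, h2, h3, fun hra => absurd hra h⟩
  choose pick hp1 hp2 hp3 hp4 using Hpick
  let blk : ℕ → ℕ := fun n => Nat.findGreatest (fun k => c k ≤ n) n
  have hblk : ∀ n, c (blk n) ≤ n ∧ n < c (blk n + 1) ∧ ∀ K, c K ≤ n → K ≤ blk n :=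
    fun n => block_spec c hc n (by rw [h0]; exact Nat.zero_le n)
  have hblk_eq : ∀ n k, c k ≤ n → n < c (k + 1) → blk n = k := by
    intro n k h1 h2
    obtain ⟨g1, g2, g3⟩ := hblk n
    have hk := g3 k h1
    rcases Nat.lt_or_ge (blk n) (k + 1) with h | h
    · omega
    · have := hc.monotone (show k + 1 ≤ blk n from h); omega
  let ρ : ℕ → Q := fun n => pick (blk n) n
  have hbd : ∀ n, c (blk n) ≤ n ∧ n < c (blk n + 1) := fun n => ⟨(hblk n).1, (hblk n).2.1⟩
  have hsucc : ∀ n, ρ (n + 1) = pick (blk n) (n + 1) := by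
    intro n
    obtain ⟨g1, g2⟩ := hbd n
    rcases Nat.lt_or_ge (n + 1) (c (blk n + 1)) with h | h
    · have : blk (n + 1) = blk n := hblk_eq (n + 1) (blk n) (by omega) h
      simp only [ρ, this]
    · have he : n + 1 = c (blk n + 1) := by omega
      have hb1 : blk (n + 1) = blk n + 1 := hblk_eq (n + 1) (blk n + 1) (by omega)
        (by rw [he]; exact hc (by omega))
      show pick (blk (n + 1)) (n + 1) = pick (blk n) (n + 1)
      rw [hb1, he, hp1, ← hp2]
  refine ⟨ρ, ?_, ?_, ?_⟩
  · show pick (blk 0) 0 = qs 0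
    have hc01 : c 0 < c (0 + 1) := hc (by omega)
    have hb0 : blk 0 = 0 := hblk_eq 0 0 (by omega) (by omega)
    have := hp1 0
    rw [h0] at this
    rw [hb0]; exact this
  · intro n
    rw [hsucc n]
    exact hp3 (blk n) n (hbd n).1 (hbd n).2
  · intro N
    obtain ⟨k, hkN, hk⟩ := hA N
    obtain ⟨n, hn1, hn2, hn3⟩ := hp4 k hk
    refine ⟨n, le_trans hkN (le_trans hc.le_apply hn1), ?_⟩
    have hb : blk n = k := hblk_eq n k hn1 hn2
    have hρ : ρ n = pick k n := by show pick (blk n) n = pick k n; rw [hb]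
    rw [hρ, hsucc n, hb]
    exact hn3


/-- Existential form of `block_spec`. -/
lemma exists_block (c : ℕ → ℕ) (hc : StrictMono c) (n : ℕ) (hn : c 0 ≤ n) :
    ∃ k, c k ≤ n ∧ n < c (k + 1) ∧ ∀ K, c K ≤ n → K ≤ k :=
  ⟨_, block_spec c hc n hn⟩

/-- The ultimately periodic word `s[0..nx) (s[nx..nx+ny))^ω`. -/
def pword (s : ℕ → C) (nx ny : ℕ) : ℕ → C :=
  fun j => if j < nx then s j else s (nx + (j - nx) % ny)

section Core

variable {Δ acc : Q → C → Q → Prop} {s : ℕ → C} {g : ℕ → ℕ}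

/-- Cut sequence `0, nx, nx + ny, nx + 2ny, …`. -/
def cuts (nx ny : ℕ) : ℕ → ℕ := fun k => if k = 0 then 0 else nx + (k - 1) * ny

lemma cuts_zero (nx ny : ℕ) : cuts nx ny 0 = 0 := rfl

lemma cuts_succ (nx ny k : ℕ) : cuts nx ny (k + 1) = nx + k * ny := by
  simp [cuts]

lemma cuts_mono {nx ny : ℕ} (hx : 1 ≤ nx) (hy : 1 ≤ ny) :
    StrictMono (cuts nx ny) := by
  apply strictMono_nat_of_lt_succ
  intro k
  cases k with
  | zero => rw [cuts_zero, cuts_succ]; omega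
  | succ k =>
    rw [cuts_succ, cuts_succ]
    have : k * ny < (k + 1) * ny := (Nat.mul_lt_mul_right hy).mpr (by omega)
    omega

lemma pword_eq_low (s : ℕ → C) {nx ny : ℕ} (hy : 1 ≤ ny) :
    ∀ n, n < nx + ny → pword s nx ny n = s n := by
  intro n hn
  unfold pword
  by_cases h : n < nx
  · rw [if_pos h]
  · rw [if_neg h]
    congr 1
    rw [Nat.mod_eq_of_lt (by omega)]
    omega

lemma pword_shift_eq (s : ℕ → C) {nx ny : ℕ} (k : ℕ) :
    ∀ n, nx ≤ n → n < nx + ny → s n = pword s nx ny (n + k * ny) := by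
  intro n h1 h2
  unfold pword
  rw [if_neg (by omega)]
  have e : (n + k * ny - nx) % ny = n - nx := by
    rw [show n + k * ny - nx = (n - nx) + k * ny by omega, Nat.add_mul_mod_self_right]
    exact Nat.mod_eq_of_lt (by omega)
  rw [e]
  congr 1
  omega

lemma coreF (hg : StrictMono g) (hg1 : 1 ≤ g 0)
    (hR : ∀ i j, i < j → RR Δ s (g i) (g j) = RR Δ s (g 0) (g 1))
    (hA : ∀ i j, i < j → RA Δ acc s (g i) (g j) = RA Δ acc s (g 0) (g 1))
    {q : Q} (h : AccFrom Δ acc q s) :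
    AccFrom Δ acc q (pword s (g 0) (g 1 - g 0)) := by
  classical
  obtain ⟨ρ, hρ0, hρΔ, hρA⟩ := h
  have hg01 : g 0 < g 1 := hg (by omega)
  have hy : 1 ≤ g 1 - g 0 := by omega
  have hcmono : StrictMono (cuts (g 0) (g 1 - g 0)) := cuts_mono hg1 hy
  have hRblocks : ∀ k, RR Δ (pword s (g 0) (g 1 - g 0))
      (cuts (g 0) (g 1 - g 0) k) (cuts (g 0) (g 1 - g 0) (k + 1))
      ((fun k => if k = 0 then q else ρ (g (k - 1))) k)
      ((fun k => if k = 0 then q else ρ (g (k - 1))) (k + 1)) := by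
    intro k
    cases k with
    | zero =>
      show RR Δ (pword s (g 0) (g 1 - g 0)) (cuts (g 0) (g 1 - g 0) 0)
        (cuts (g 0) (g 1 - g 0) 1) q (ρ (g 0))
      rw [cuts_zero, cuts_succ]
      have base : RR Δ s 0 (g 0) q (ρ (g 0)) :=
        ⟨ρ, hρ0, rfl, fun n _ _ => hρΔ n⟩
      have h2 : RR Δ (pword s (g 0) (g 1 - g 0)) 0 (g 0) q (ρ (g 0)) := by
        refine RR_congr (fun n h1 h2 => ?_) base
        exact (pword_eq_low s hy n (by omega)).symm
      have e : g 0 + 0 * (g 1 - g 0) = g 0 := by omega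
      rw [e]
      exact h2
    | succ k =>
      show RR Δ (pword s (g 0) (g 1 - g 0)) (cuts (g 0) (g 1 - g 0) (k + 1))
        (cuts (g 0) (g 1 - g 0) (k + 1 + 1)) (ρ (g k)) (ρ (g (k + 1)))
      rw [cuts_succ, cuts_succ]
      have base : RR Δ s (g k) (g (k + 1)) (ρ (g k)) (ρ (g (k + 1))) :=
        ⟨ρ, rfl, rfl, fun n _ _ => hρΔ n⟩
      have base2 : RR Δ s (g 0) (g 1) (ρ (g k)) (ρ (g (k + 1))) := by
        rw [← hR k (k + 1) (by omega)]; exact base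
      have heq : ∀ n, g 0 ≤ n → n < g 1 →
          s n = pword s (g 0) (g 1 - g 0) (n + k * (g 1 - g 0)) := by
        intro n h1 h2
        exact pword_shift_eq s k n (by omega) (by omega)
      have hsh := RR_shift (k * (g 1 - g 0)) heq base2
      have eA : g 0 + k * (g 1 - g 0) = g 0 + k * (g 1 - g 0) := rfl
      have eB : g 0 + (k + 1) * (g 1 - g 0) = g 1 + k * (g 1 - g 0) := by
        have : (k + 1) * (g 1 - g 0) = k * (g 1 - g 0) + (g 1 - g 0) := by ring
        omega
      rw [eB]
      exact hsh
  have hAblocks : ∀ K, ∃ k ≥ K, RA Δ acc (pword s (g 0) (g 1 - g 0))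
      (cuts (g 0) (g 1 - g 0) k) (cuts (g 0) (g 1 - g 0) (k + 1))
      ((fun k => if k = 0 then q else ρ (g (k - 1))) k)
      ((fun k => if k = 0 then q else ρ (g (k - 1))) (k + 1)) := by
    intro K
    obtain ⟨n, hnN, hacc⟩ := hρA (g K)
    obtain ⟨i, b1, b2, b3⟩ := exists_block g hg n (le_trans (hg.monotone (Nat.zero_le K)) hnN)
    have hiK : K ≤ i := b3 K hnN
    have base : RA Δ acc s (g i) (g (i + 1)) (ρ (g i)) (ρ (g (i + 1))) :=
      ⟨ρ, rfl, rfl, fun n _ _ => hρΔ n, n, b1, b2, hacc⟩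
    have base2 : RA Δ acc s (g 0) (g 1) (ρ (g i)) (ρ (g (i + 1))) := by
      rw [← hA i (i + 1) (by omega)]; exact base
    have heq : ∀ n, g 0 ≤ n → n < g 1 →
        s n = pword s (g 0) (g 1 - g 0) (n + i * (g 1 - g 0)) := by
      intro n h1 h2
      exact pword_shift_eq s i n (by omega) (by omega)
    have hsh := RA_shift (i * (g 1 - g 0)) heq base2
    refine ⟨i + 1, by omega, ?_⟩
    show RA Δ acc (pword s (g 0) (g 1 - g 0)) (cuts (g 0) (g 1 - g 0) (i + 1))
      (cuts (g 0) (g 1 - g 0) (i + 1 + 1)) (ρ (g i)) (ρ (g (i + 1)))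
    rw [cuts_succ, cuts_succ]
    have eB : g 0 + (i + 1) * (g 1 - g 0) = g 1 + i * (g 1 - g 0) := by
      have : (i + 1) * (g 1 - g 0) = i * (g 1 - g 0) + (g 1 - g 0) := by ring
      omega
    rw [eB]
    exact hsh
  exact glue Δ acc (pword s (g 0) (g 1 - g 0)) (cuts (g 0) (g 1 - g 0)) hcmono
    (cuts_zero _ _) (fun k => if k = 0 then q else ρ (g (k - 1))) hRblocks hAblocks

lemma coreB (hg : StrictMono g) (hg1 : 1 ≤ g 0)
    (hR : ∀ i j, i < j → RR Δ s (g i) (g j) = RR Δ s (g 0) (g 1))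
    (hA : ∀ i j, i < j → RA Δ acc s (g i) (g j) = RA Δ acc s (g 0) (g 1))
    {q : Q} (h : AccFrom Δ acc q (pword s (g 0) (g 1 - g 0))) :
    AccFrom Δ acc q s := by
  classical
  obtain ⟨ρ, hρ0, hρΔ, hρA⟩ := h
  have hg01 : g 0 < g 1 := hg (by omega)
  have hy : 1 ≤ g 1 - g 0 := by omega
  have hcmono : StrictMono (cuts (g 0) (g 1 - g 0)) := cuts_mono hg1 hy
  have heqs : ∀ j : ℕ, ∀ n, g 0 ≤ n → n < g 1 →
      pword s (g 0) (g 1 - g 0) (n + j * (g 1 - g 0)) = s n := by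
    intro j n h1 h2
    exact (pword_shift_eq s j n (by omega) (by omega)).symm
  have eB : ∀ j : ℕ, g 0 + (j + 1) * (g 1 - g 0) = g 1 + j * (g 1 - g 0) := by
    intro j
    have : (j + 1) * (g 1 - g 0) = j * (g 1 - g 0) + (g 1 - g 0) := by ring
    omega
  have hblocktrans : ∀ j j', RR Δ (pword s (g 0) (g 1 - g 0))
      (g 0 + j * (g 1 - g 0)) (g 0 + (j + 1) * (g 1 - g 0))
      (ρ (g 0 + j * (g 1 - g 0))) (ρ (g 0 + (j + 1) * (g 1 - g 0))) →
      RR Δ s (g j') (g (j' + 1))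
      (ρ (g 0 + j * (g 1 - g 0))) (ρ (g 0 + (j + 1) * (g 1 - g 0))) := by
    intro j j' hb
    rw [eB j] at hb
    have h2 := RR_unshift (j * (g 1 - g 0)) (heqs j) hb
    rw [← hR j' (j' + 1) (by omega)] at h2
    rw [← eB j] at h2
    exact h2
  have hAtrans : ∀ j j', RA Δ acc (pword s (g 0) (g 1 - g 0))
      (g 0 + j * (g 1 - g 0)) (g 0 + (j + 1) * (g 1 - g 0))
      (ρ (g 0 + j * (g 1 - g 0))) (ρ (g 0 + (j + 1) * (g 1 - g 0))) →
      RA Δ acc s (g j') (g (j' + 1))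
      (ρ (g 0 + j * (g 1 - g 0))) (ρ (g 0 + (j + 1) * (g 1 - g 0))) := by
    intro j j' hb
    rw [eB j] at hb
    have h2 := RA_unshift (j * (g 1 - g 0)) (heqs j) hb
    rw [← hA j' (j' + 1) (by omega)] at h2
    rw [← eB j] at h2
    exact h2
  -- glue along cuts 0, g 0, g 1, g 2, ...
  have hemono : StrictMono (fun k => if k = 0 then 0 else g (k - 1)) := by
    apply strictMono_nat_of_lt_succ
    intro k
    cases k with
    | zero => show 0 < g 0; omega
    | succ k => show g k < g (k + 1); exact hg (by omega)
  have hRblocks : ∀ k, RR Δ s ((fun k => if k = 0 then 0 else g (k - 1)) k)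
      ((fun k => if k = 0 then 0 else g (k - 1)) (k + 1))
      ((fun k => if k = 0 then q else ρ (g 0 + (k - 1) * (g 1 - g 0))) k)
      ((fun k => if k = 0 then q else ρ (g 0 + (k - 1) * (g 1 - g 0))) (k + 1)) := by
    intro k
    cases k with
    | zero =>
      show RR Δ s 0 (g 0) q (ρ (g 0 + 0 * (g 1 - g 0)))
      have e0 : g 0 + 0 * (g 1 - g 0) = g 0 := by omega
      rw [e0]
      have base : RR Δ (pword s (g 0) (g 1 - g 0)) 0 (g 0) q (ρ (g 0)) :=
        ⟨ρ, hρ0, rfl, fun n _ _ => hρΔ n⟩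
      refine RR_congr (fun n h1 h2 => ?_) base
      exact pword_eq_low s hy n (by omega)
    | succ k =>
      show RR Δ s (g k) (g (k + 1)) (ρ (g 0 + k * (g 1 - g 0)))
        (ρ (g 0 + (k + 1) * (g 1 - g 0)))
      exact hblocktrans k k ⟨ρ, rfl, rfl, fun n _ _ => hρΔ n⟩
  have hAblocks : ∀ K, ∃ k ≥ K, RA Δ acc s ((fun k => if k = 0 then 0 else g (k - 1)) k)
      ((fun k => if k = 0 then 0 else g (k - 1)) (k + 1))
      ((fun k => if k = 0 then q else ρ (g 0 + (k - 1) * (g 1 - g 0))) k)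
      ((fun k => if k = 0 then q else ρ (g 0 + (k - 1) * (g 1 - g 0))) (k + 1)) := by
    intro K
    obtain ⟨n, hnN, hacc⟩ := hρA (cuts (g 0) (g 1 - g 0) (K + 1))
    have hc0n : cuts (g 0) (g 1 - g 0) 0 ≤ n := by
      have := hcmono.monotone (Nat.zero_le (K + 1)); omega
    obtain ⟨i, b1, b2, b3⟩ := exists_block _ hcmono n hc0n
    have hiK : K + 1 ≤ i := b3 (K + 1) hnN
    obtain ⟨j, rfl⟩ : ∃ j, i = j + 1 := ⟨i - 1, by omega⟩
    rw [cuts_succ] at b1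
    rw [cuts_succ] at b2
    have base : RA Δ acc (pword s (g 0) (g 1 - g 0))
        (g 0 + j * (g 1 - g 0)) (g 0 + (j + 1) * (g 1 - g 0))
        (ρ (g 0 + j * (g 1 - g 0))) (ρ (g 0 + (j + 1) * (g 1 - g 0))) :=
      ⟨ρ, rfl, rfl, fun n _ _ => hρΔ n, n, b1, b2, hacc⟩
    refine ⟨j + 1, by omega, ?_⟩
    show RA Δ acc s (g j) (g (j + 1)) (ρ (g 0 + j * (g 1 - g 0)))
      (ρ (g 0 + (j + 1) * (g 1 - g 0)))
    exact hAtrans j j base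
  exact glue Δ acc s (fun k => if k = 0 then 0 else g (k - 1)) hemono rfl
    (fun k => if k = 0 then q else ρ (g 0 + (k - 1) * (g 1 - g 0))) hRblocks hAblocks

end Core



section Prefix

variable {C Q : Type}

lemma extWord_lt (w : List C) (s : ℕ → C) {n : ℕ} (h : n < w.length) :
    extWord w s n = w.get ⟨n, h⟩ := dif_pos h

lemma extWord_ge (w : List C) (s : ℕ → C) {n : ℕ} (h : w.length ≤ n) :
    extWord w s n = s (n - w.length) := dif_neg (by omega)

/-- States reachable from `init` by reading the finite word `w`. -/
def QReach (Δ : Q → C → Q → Prop) (init : Set Q) (w : List C) (q : Q) : Prop :=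
  ∃ σ : ℕ → Q, σ 0 ∈ init ∧ (∀ i, ∀ h : i < w.length, Δ (σ i) (w.get ⟨i, h⟩) (σ (i + 1))) ∧
    σ w.length = q

lemma accepts_ext_iff (init : Set Q) (Δ acc : Q → C → Q → Prop) (w : List C) (t : ℕ → C) :
    NBAAccepts init Δ acc (extWord w t) ↔ ∃ q, QReach Δ init w q ∧ AccFrom Δ acc q t := by
  constructor
  · rintro ⟨ρ, h0, hΔ, hacc⟩
    refine ⟨ρ w.length, ⟨ρ, h0, fun i h => ?_, rfl⟩, fun n => ρ (n + w.length), by simp, ?_, ?_⟩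
    · have := hΔ i
      rwa [extWord_lt w t h] at this
    · intro n
      have h2 := hΔ (n + w.length)
      rw [extWord_ge w t (by omega), Nat.add_sub_cancel] at h2
      show Δ (ρ (n + w.length)) (t n) (ρ (n + 1 + w.length))
      rw [show n + 1 + w.length = n + w.length + 1 by omega]
      exact h2
    · intro N
      obtain ⟨n, hn, ha⟩ := hacc (N + w.length)
      rw [extWord_ge w t (by omega)] at ha
      refine ⟨n - w.length, by omega, ?_⟩
      show acc (ρ (n - w.length + w.length)) (t (n - w.length)) (ρ (n - w.length + 1 + w.length))
      rw [show n - w.length + w.length = n by omega, show n - w.length + 1 + w.length = n + 1 by omega]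
      exact ha
  · rintro ⟨q, ⟨σ, h0, hσ, hlen⟩, ⟨ρ, hρ0, hρΔ, hρA⟩⟩
    classical
    refine ⟨fun n => if n < w.length then σ n else ρ (n - w.length), ?_, ?_, ?_⟩
    · by_cases h : 0 < w.length
      · simpa [h] using h0
      · have hl : w.length = 0 := by omega
        simp only [if_neg (by omega : ¬ (0:ℕ) < w.length)]
        have : σ 0 = q := by rw [← hlen, hl]
        rw [Nat.zero_sub, hρ0, ← this]
        exact h0
    · intro n
      by_cases h : n < w.length
      · rw [extWord_lt w t h]
        simp only [if_pos h]
        by_cases h' : n + 1 < w.length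
        · rw [if_pos h']
          exact hσ n h
        · rw [if_neg h']
          have e : n + 1 = w.length := by omega
          have e2 : n + 1 - w.length = 0 := by omega
          rw [e2, hρ0, ← hlen]
          have h3 := hσ n h
          rwa [e] at h3
      · rw [extWord_ge w t (by omega)]
        simp only [if_neg h, if_neg (show ¬ n + 1 < w.length by omega)]
        rw [show n + 1 - w.length = (n - w.length) + 1 by omega]
        exact hρΔ (n - w.length)
    · intro N
      obtain ⟨n, hn, ha⟩ := hρA N
      refine ⟨n + w.length, by omega, ?_⟩
      rw [extWord_ge w t (by omega)]
      simp only [if_neg (show ¬ n + w.length < w.length by omega),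
        if_neg (show ¬ n + w.length + 1 < w.length by omega)]
      rw [Nat.add_sub_cancel, show n + w.length + 1 - w.length = n + 1 by omega]
      exact ha

end Prefix

section TPos

/-- Position in the tail lasso after `j` steps. -/
def tpos (nx ny j : ℕ) : ℕ := if j < nx then j else nx + (j - nx) % ny

lemma tpos_lt {nx ny : ℕ} (hx : 1 ≤ nx) (hy : 1 ≤ ny) (j : ℕ) : tpos nx ny j < nx + ny := by
  unfold tpos
  split
  · omega
  · have := Nat.mod_lt (j - nx) (show 0 < ny by omega)
    omega

lemma tpos_one {nx ny : ℕ} (hx : 1 ≤ nx) : tpos nx ny 1 = 1 := by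
  unfold tpos
  split
  · rfl
  · have : nx = 1 := by omega
    simp [this]

lemma tpos_succ {nx ny : ℕ} (hx : 1 ≤ nx) (hy : 1 ≤ ny) (j : ℕ) :
    tpos nx ny (j + 1) = if tpos nx ny j + 1 < nx + ny then tpos nx ny j + 1 else nx := by
  unfold tpos
  by_cases h1 : j < nx
  · rw [if_pos h1]
    by_cases h2 : j + 1 < nx
    · rw [if_pos h2, if_pos (by omega)]
    · -- j + 1 = nx
      rw [if_neg h2, if_pos (by omega)]
      have e : (j + 1 - nx) % ny = 0 := by
        rw [show j + 1 - nx = 0 by omega]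
        exact Nat.zero_mod ny
      omega
  · rw [if_neg h1, if_neg (by omega)]
    have hr := Nat.mod_lt (j - nx) (show 0 < ny by omega)
    have e1 : (j + 1 - nx) % ny = ((j - nx) % ny + 1) % ny := by
      rw [Nat.mod_add_mod, show j - nx + 1 = j + 1 - nx by omega]
    by_cases h2 : (j - nx) % ny + 1 < ny
    · rw [if_pos (by omega)]
      rw [e1, Nat.mod_eq_of_lt h2]
      omega
    · rw [if_neg (by omega)]
      have e2 : (j - nx) % ny + 1 = ny := by omega
      rw [e1, e2, Nat.mod_self]
      omega

end TPos

end Stmt8Aux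

namespace Stmt8Aux

section Arena

set_option maxHeartbeats 16000000 in
theorem arena_main {C : Type} (W : Set (ℕ → C)) (hpos : HalfPosFinOnePlayer W)
    (w₁ w₂ : List C) (h₂ : w₂ ≠ []) (sxy : ℕ → C) (nx ny : ℕ) (hx : 1 ≤ nx) (hy : 1 ≤ ny)
    (hper : ∀ j, nx ≤ j → sxy j = sxy (nx + (j - nx) % ny))
    (hwin : extWord (w₁ ++ w₂) sxy ∈ W) :
    extWord w₁ (periodicW w₂ h₂) ∈ W ∨ extWord w₁ sxy ∈ W := by
  classical
  have hm : 1 ≤ w₂.length := List.length_pos_iff.mpr h₂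
  set k := w₁.length with hkdef
  set m := w₂.length with hmdef
  set b0 : Fin m := ⟨0, by omega⟩ with hb0
  set t1 : Fin (nx + ny) := ⟨1, by omega⟩ with ht1
  set nA : Fin k → (Fin k ⊕ Fin m ⊕ Fin (nx + ny)) := fun i =>
    if h : (i : ℕ) + 1 < k then Sum.inl ⟨(i : ℕ) + 1, h⟩ else Sum.inr (Sum.inl b0) with hnA
  set bn : Fin m → Fin m := fun j => ⟨((j : ℕ) + 1) % m, Nat.mod_lt _ (by omega)⟩ with hbn
  set tn : Fin (nx + ny) → Fin (nx + ny) := fun i =>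
    if h : (i : ℕ) + 1 < nx + ny then ⟨(i : ℕ) + 1, h⟩ else ⟨nx, by omega⟩ with htn
  set E : Set ((Fin k ⊕ Fin m ⊕ Fin (nx + ny)) × C × (Fin k ⊕ Fin m ⊕ Fin (nx + ny))) :=
    {e | (∃ i : Fin k, e = (Sum.inl i, w₁.get i, nA i)) ∨
         (∃ j : Fin m, e = (Sum.inr (Sum.inl j), w₂.get j, Sum.inr (Sum.inl (bn j)))) ∨
         e = (Sum.inr (Sum.inl b0), sxy 0, Sum.inr (Sum.inr t1)) ∨
         (∃ i : Fin (nx + ny), e = (Sum.inr (Sum.inr i), sxy (i : ℕ), Sum.inr (Sum.inr (tn i))))}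
    with hE
  have memP : ∀ i : Fin k, (Sum.inl i, w₁.get i, nA i) ∈ E := fun i => Or.inl ⟨i, rfl⟩
  have memB : ∀ j : Fin m,
      ((Sum.inr (Sum.inl j) : Fin k ⊕ Fin m ⊕ Fin (nx + ny)), w₂.get j,
        (Sum.inr (Sum.inl (bn j)) : Fin k ⊕ Fin m ⊕ Fin (nx + ny))) ∈ E :=
    fun j => Or.inr (Or.inl ⟨j, rfl⟩)
  have memT0 : ((Sum.inr (Sum.inl b0) : Fin k ⊕ Fin m ⊕ Fin (nx + ny)), sxy 0,
      (Sum.inr (Sum.inr t1) : Fin k ⊕ Fin m ⊕ Fin (nx + ny))) ∈ E :=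
    Or.inr (Or.inr (Or.inl rfl))
  have memT : ∀ i : Fin (nx + ny),
      ((Sum.inr (Sum.inr i) : Fin k ⊕ Fin m ⊕ Fin (nx + ny)), sxy (i : ℕ),
        (Sum.inr (Sum.inr (tn i)) : Fin k ⊕ Fin m ⊕ Fin (nx + ny))) ∈ E :=
    fun i => Or.inr (Or.inr (Or.inr ⟨i, rfl⟩))
  have elimP : ∀ (i : Fin k) (cc : C) (v' : Fin k ⊕ Fin m ⊕ Fin (nx + ny)),
      (Sum.inl i, cc, v') ∈ E → cc = w₁.get i ∧ v' = nA i := by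
    intro i cc v' he
    rcases he with ⟨i', he⟩ | ⟨j, he⟩ | he | ⟨i', he⟩
    · simp only [Prod.mk.injEq, Sum.inl.injEq] at he
      obtain ⟨rfl, h2, h3⟩ := he
      exact ⟨h2, h3⟩
    · simp only [Prod.mk.injEq] at he
      exact nomatch he.1
    · simp only [Prod.mk.injEq] at he
      exact nomatch he.1
    · simp only [Prod.mk.injEq] at he
      exact nomatch he.1
  have elimB : ∀ (j : Fin m) (cc : C) (v' : Fin k ⊕ Fin m ⊕ Fin (nx + ny)),
      (Sum.inr (Sum.inl j), cc, v') ∈ E →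
      (cc = w₂.get j ∧ v' = Sum.inr (Sum.inl (bn j))) ∨
      (j = b0 ∧ cc = sxy 0 ∧ v' = Sum.inr (Sum.inr t1)) := by
    intro j cc v' he
    rcases he with ⟨i', he⟩ | ⟨j', he⟩ | he | ⟨i', he⟩
    · simp only [Prod.mk.injEq] at he
      exact nomatch he.1
    · simp only [Prod.mk.injEq, Sum.inr.injEq, Sum.inl.injEq] at he
      obtain ⟨rfl, h2, h3⟩ := he
      exact Or.inl ⟨h2, h3⟩
    · simp only [Prod.mk.injEq, Sum.inr.injEq, Sum.inl.injEq] at he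
      exact Or.inr he
    · simp only [Prod.mk.injEq, Sum.inr.injEq] at he
      exact nomatch he.1
  have elimT : ∀ (i : Fin (nx + ny)) (cc : C) (v' : Fin k ⊕ Fin m ⊕ Fin (nx + ny)),
      (Sum.inr (Sum.inr i), cc, v') ∈ E → cc = sxy (i : ℕ) ∧ v' = Sum.inr (Sum.inr (tn i)) := by
    intro i cc v' he
    rcases he with ⟨i', he⟩ | ⟨j', he⟩ | he | ⟨i', he⟩
    · simp only [Prod.mk.injEq] at he
      exact nomatch he.1
    · simp only [Prod.mk.injEq, Sum.inr.injEq] at he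
      exact nomatch he.1
    · simp only [Prod.mk.injEq, Sum.inr.injEq] at he
      exact nomatch he.1
    · simp only [Prod.mk.injEq, Sum.inr.injEq, Sum.inr.injEq] at he
      obtain ⟨rfl, h2, h3⟩ := he
      exact ⟨h2, h3⟩
  have hnb : ∀ v : Fin k ⊕ Fin m ⊕ Fin (nx + ny), ∃ c v', (v, c, v') ∈ E := by
    rintro (i | j | i)
    · exact ⟨_, _, memP i⟩
    · exact ⟨_, _, memB j⟩
    · exact ⟨_, _, memT i⟩
  obtain ⟨σ, hval, hposi, hopt⟩ := hpos _ E hnb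
  -- intended play
  set tpF : ℕ → Fin (nx + ny) := fun j => ⟨tpos nx ny j, tpos_lt hx hy j⟩ with htpF
  set v0 : Fin k ⊕ Fin m ⊕ Fin (nx + ny) :=
    if h : 0 < k then Sum.inl ⟨0, h⟩ else Sum.inr (Sum.inl b0) with hv0def
  set posA : ℕ → (Fin k ⊕ Fin m ⊕ Fin (nx + ny)) := fun n =>
    if h : n < k then Sum.inl ⟨n, h⟩
    else Sum.inr (Sum.inl ⟨(n - k) % m, Nat.mod_lt _ (by omega)⟩) with hposA
  set posB : ℕ → (Fin k ⊕ Fin m ⊕ Fin (nx + ny)) := fun n =>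
    if h : n < k then Sum.inl ⟨n, h⟩
    else if n = k then Sum.inr (Sum.inl b0) else Sum.inr (Sum.inr (tpF (n - k))) with hposB
  set pτ : ℕ → (Fin k ⊕ Fin m ⊕ Fin (nx + ny)) := fun n =>
    if n < k + m then posA n else posB (n - m) with hpτ
  set dflt : (Fin k ⊕ Fin m ⊕ Fin (nx + ny)) → C × (Fin k ⊕ Fin m ⊕ Fin (nx + ny)) := fun v =>
    match v with
    | Sum.inl i => (w₁.get i, nA i)
    | Sum.inr (Sum.inl j) => (w₂.get j, Sum.inr (Sum.inl (bn j)))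
    | Sum.inr (Sum.inr i) => (sxy (i : ℕ), Sum.inr (Sum.inr (tn i))) with hdflt
  set τ : Strat C (Fin k ⊕ Fin m ⊕ Fin (nx + ny)) := fun h v =>
    if v = pτ h.length then (extWord (w₁ ++ w₂) sxy h.length, pτ (h.length + 1)) else dflt v
    with hτ
  have hsxy_tpos : ∀ j, sxy (tpos nx ny j) = sxy j := by
    intro j
    unfold tpos
    split
    · rfl
    · exact (hper j (by omega)).symm
  -- evaluation lemmas
  have posA_lt : ∀ n (h : n < k), posA n = Sum.inl ⟨n, h⟩ := by
    intro n h; simp only [hposA]; rw [dif_pos h]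
  have posA_ge : ∀ n (h : ¬ n < k), posA n =
      Sum.inr (Sum.inl ⟨(n - k) % m, Nat.mod_lt _ (by omega)⟩) := by
    intro n h; simp only [hposA]; rw [dif_neg h]
  have posB_lt : ∀ n (h : n < k), posB n = Sum.inl ⟨n, h⟩ := by
    intro n h; simp only [hposB]; rw [dif_pos h]
  have posB_eq : posB k = Sum.inr (Sum.inl b0) := by
    simp only [hposB]; rw [dif_neg (by omega)]; simp
  have posB_gt : ∀ n, k < n → posB n = Sum.inr (Sum.inr (tpF (n - k))) := by
    intro n h; simp only [hposB]; rw [dif_neg (by omega), if_neg (by omega)]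
  have nA_to_posA : ∀ n (h : n < k), nA ⟨n, h⟩ = posA (n + 1) := by
    intro n h
    simp only [hnA, hposA]
    by_cases h' : n + 1 < k
    · rw [dif_pos h', dif_pos h']
    · rw [dif_neg h', dif_neg h']
      have e : (n + 1 - k) % m = 0 := by rw [show n + 1 - k = 0 by omega]; exact Nat.zero_mod m
      simp only [hb0]
      congr 2
      exact Fin.ext (by simp [e])
  have nA_to_posB : ∀ n (h : n < k), nA ⟨n, h⟩ = posB (n + 1) := by
    intro n h
    simp only [hnA, hposB]
    by_cases h' : n + 1 < k
    · rw [dif_pos h', dif_pos h']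
    · rw [dif_neg h', dif_neg h', if_pos (by omega)]
  have bn_to_posA : ∀ n (h : ¬ n < k),
      (Sum.inr (Sum.inl (bn ⟨(n - k) % m, Nat.mod_lt _ (by omega)⟩)) :
        Fin k ⊕ Fin m ⊕ Fin (nx + ny)) = posA (n + 1) := by
    intro n h
    rw [posA_ge (n + 1) (by omega)]
    simp only [hbn]
    congr 2
    apply Fin.ext
    show ((n - k) % m + 1) % m = (n + 1 - k) % m
    rw [Nat.mod_add_mod, show n - k + 1 = n + 1 - k by omega]
  have tn_to_tpF : ∀ j, tn (tpF j) = tpF (j + 1) := by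
    intro j
    apply Fin.ext
    show (tn (tpF j) : ℕ) = tpos nx ny (j + 1)
    rw [tpos_succ hx hy j]
    simp only [htn, htpF]
    by_cases h : tpos nx ny j + 1 < nx + ny
    · rw [dif_pos h, if_pos h]
    · rw [dif_neg h, if_neg h]
  have pτ_lo : ∀ n, n < k + m → pτ n = posA n := by
    intro n h; simp only [hpτ]; rw [if_pos h]
  have pτ_hi : ∀ n, ¬ n < k + m → pτ n = posB (n - m) := by
    intro n h; simp only [hpτ]; rw [if_neg h]
  -- the intended play traverses actual edges
  have hplayτ : ∀ n, (pτ n, extWord (w₁ ++ w₂) sxy n, pτ (n + 1)) ∈ E := by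
    intro n
    have hlapp : (w₁ ++ w₂).length = k + m := by rw [List.length_append]
    by_cases h1 : n < k
    · have e1 : pτ n = Sum.inl ⟨n, h1⟩ := by
        simp only [hpτ]; rw [if_pos (by omega)]; exact posA_lt n h1
      have ec : extWord (w₁ ++ w₂) sxy n = w₁.get ⟨n, h1⟩ := by
        rw [extWord_lt (w₁ ++ w₂) sxy (by omega)]
        simp only [List.get_eq_getElem]
        exact List.getElem_append_left h1
      have e2 : pτ (n + 1) = nA ⟨n, h1⟩ := by
        by_cases h' : n + 1 < k + m
        · rw [pτ_lo (n + 1) h']; exact (nA_to_posA n h1).symm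
        · -- n + 1 = k + m, so k = n + 1, m = 0? impossible since m ≥ 1 and n < k
          omega
      simp only [e1, ec, e2]
      exact memP _
    · by_cases h2 : n < k + m
      · have hlt : n - k < m := by omega
        have e1 : pτ n = Sum.inr (Sum.inl ⟨(n - k) % m, Nat.mod_lt _ (by omega)⟩) := by
          rw [pτ_lo n h2]; exact posA_ge n h1
        have ec : extWord (w₁ ++ w₂) sxy n =
            w₂.get ⟨(n - k) % m, Nat.mod_lt _ (by omega)⟩ := by
          rw [extWord_lt (w₁ ++ w₂) sxy (by omega)]
          simp only [List.get_eq_getElem]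
          rw [List.getElem_append_right (by omega)]
          congr 1
          rw [Nat.mod_eq_of_lt hlt]
        have e2 : pτ (n + 1) =
            Sum.inr (Sum.inl (bn ⟨(n - k) % m, Nat.mod_lt _ (by omega)⟩)) := by
          by_cases h' : n + 1 < k + m
          · rw [pτ_lo (n + 1) h']
            rw [bn_to_posA n h1]
          · have e3 : n + 1 - m = k := by omega
            rw [pτ_hi (n + 1) (by omega), e3, posB_eq]
            have efin : bn ⟨(n - k) % m, Nat.mod_lt _ (by omega)⟩ = b0 := by
              apply Fin.ext
              show ((n - k) % m + 1) % m = (0 : ℕ)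
              rw [Nat.mod_add_mod, show n - k + 1 = m by omega, Nat.mod_self]
            rw [efin]
        simp only [e1, ec, e2]
        exact memB _
      · by_cases h3 : n = k + m
        · have e1 : pτ n = Sum.inr (Sum.inl b0) := by
            simp only [hpτ]; rw [if_neg (by omega), show n - m = k by omega, posB_eq]
          have ec : extWord (w₁ ++ w₂) sxy n = sxy 0 := by
            rw [extWord_ge (w₁ ++ w₂) sxy (by omega)]
            congr 1
            omega
          have e2 : pτ (n + 1) = Sum.inr (Sum.inr t1) := by
            rw [pτ_hi (n + 1) (by omega)]
            rw [posB_gt (n + 1 - m) (by omega)]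
            congr 2
            simp only [htpF, ht1]
            apply Fin.ext
            show tpos nx ny (n + 1 - m - k) = 1
            rw [show n + 1 - m - k = 1 by omega]
            exact tpos_one hx
          simp only [e1, ec, e2]
          exact memT0
        · have hj : 1 ≤ n - (k + m) := by omega
          have e1 : pτ n = Sum.inr (Sum.inr (tpF (n - m - k))) := by
            rw [pτ_hi n (by omega)]
            exact posB_gt (n - m) (by omega)
          have ec : extWord (w₁ ++ w₂) sxy n = sxy ((tpF (n - m - k) : Fin (nx + ny)) : ℕ) := by
            rw [extWord_ge (w₁ ++ w₂) sxy (by omega), hlapp]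
            show sxy (n - (k + m)) = sxy (tpos nx ny (n - m - k))
            rw [hsxy_tpos]
            congr 1
            omega
          have e2 : pτ (n + 1) = Sum.inr (Sum.inr (tn (tpF (n - m - k)))) := by
            rw [pτ_hi (n + 1) (by omega)]
            rw [posB_gt (n + 1 - m) (by omega), tn_to_tpF]
            congr 2
            congr 1
            omega
          simp only [e1, ec, e2]
          exact memT _
  have hτeq : ∀ hh : List ((Fin k ⊕ Fin m ⊕ Fin (nx + ny)) × C),
      τ hh (pτ hh.length) = (extWord (w₁ ++ w₂) sxy hh.length, pτ (hh.length + 1)) := by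
    intro hh
    simp only [hτ]
    simp
  have hvalτ : ValidStrat E (fun _ => True) τ := by
    intro h v _
    by_cases hv : v = pτ h.length
    · subst hv
      simp only [hτeq h]
      exact hplayτ h.length
    · have ht : τ h v = dflt v := by
        simp only [hτ]; rw [if_neg hv]
      rcases v with i | j | i
      · have ht2 : τ h (Sum.inl i) = (w₁.get i, nA i) := ht
        simp only [ht2]
        exact memP i
      · have ht2 : τ h (Sum.inr (Sum.inl j)) = (w₂.get j, Sum.inr (Sum.inl (bn j))) := ht
        simp only [ht2]
        exact memB j
      · have ht2 : τ h (Sum.inr (Sum.inr i)) = (sxy (i : ℕ), Sum.inr (Sum.inr (tn i))) := ht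
        simp only [ht2]
        exact memT i
  have hlenh : ∀ (p : ℕ → Fin k ⊕ Fin m ⊕ Fin (nx + ny)) (col : ℕ → C) n,
      (histPref p col n).length = n := by
    intro p col n; simp [histPref]
  have hv0A : v0 = posA 0 := by
    by_cases h : 0 < k
    · have l : v0 = Sum.inl ⟨0, h⟩ := by simp only [hv0def]; rw [dif_pos h]
      rw [l, posA_lt 0 h]
    · have l : v0 = Sum.inr (Sum.inl b0) := by simp only [hv0def]; rw [dif_neg h]
      rw [l, posA_ge 0 h]
      simp only [hb0]
      congr 2
      exact Fin.ext (by simp)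
  have hv0τ : v0 = pτ 0 := by
    rw [hv0A, pτ_lo 0 (by omega)]
  have hwinτ : WinningFrom W E (fun _ => True) τ v0 := by
    intro p col hplay hp0 hcons
    have hτn : ∀ n, τ (histPref p col n) (pτ n) =
        (extWord (w₁ ++ w₂) sxy n, pτ (n + 1)) := by
      intro n
      have := hτeq (histPref p col n)
      rwa [hlenh p col n] at this
    have key : ∀ n, p n = pτ n := by
      intro n
      induction n with
      | zero => rw [hp0, hv0τ]
      | succ n ih =>
        have hc := hcons n trivial
        rw [ih, hτn n] at hc
        exact (Prod.ext_iff.mp hc).2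
    have keyc : ∀ n, col n = extWord (w₁ ++ w₂) sxy n := by
      intro n
      have hc := hcons n trivial
      rw [key n, hτn n] at hc
      exact (Prod.ext_iff.mp hc).1
    have : col = extWord (w₁ ++ w₂) sxy := funext keyc
    rw [this]
    exact hwin
  have hσv0 := hopt v0 ⟨τ, hvalτ, hwinτ⟩
  -- the orbit of the positional strategy
  obtain ⟨p, hp0, hpS⟩ : ∃ p : ℕ → Fin k ⊕ Fin m ⊕ Fin (nx + ny),
      p 0 = v0 ∧ ∀ n, p (n + 1) = (σ [] (p n)).2 :=
    ⟨fun n => Nat.rec v0 (fun _ pv => (σ [] pv).2) n, rfl, fun n => rfl⟩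
  obtain ⟨col, hcol⟩ : ∃ col : ℕ → C, ∀ n, col n = (σ [] (p n)).1 := ⟨_, fun n => rfl⟩
  have hIsPlay : IsPlay E p col := by
    intro n
    rw [hcol n, hpS n]
    exact hval [] (p n) trivial
  have hconsσ : ConsistentPlay (fun _ => True) σ p col := by
    intro n _
    rw [hposi (histPref p col n) [] (p n), hcol n, hpS n]
  have hcolW : col ∈ W := hσv0 p col hIsPlay hp0 hconsσ
  -- dichotomy at the branch vertex
  have hedgeB := hval [] (Sum.inr (Sum.inl b0)) trivial
  rcases elimB b0 _ _ hedgeB with ⟨hc1, hc2⟩ | ⟨_, hc1, hc2⟩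
  · -- loop case: the orbit follows posA and produces w₁ w₂^ω
    left
    have hstepA : ∀ n, p n = posA n →
        col n = extWord w₁ (periodicW w₂ h₂) n ∧ p (n + 1) = posA (n + 1) := by
      intro n hpn
      by_cases h1 : n < k
      · have hpn' : p n = Sum.inl ⟨n, h1⟩ := by rw [hpn]; exact posA_lt n h1
        obtain ⟨hcc, hvv⟩ := elimP ⟨n, h1⟩ _ _ (hval [] (Sum.inl ⟨n, h1⟩) trivial)
        constructor
        · simp only [hcol n, hpn', hcc]
          exact (extWord_lt w₁ _ h1).symm
        · simp only [hpS n, hpn', hvv]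
          exact nA_to_posA n h1
      · have hpn' : p n = Sum.inr (Sum.inl ⟨(n - k) % m, Nat.mod_lt _ (by omega)⟩) := by
          rw [hpn]; exact posA_ge n h1
        by_cases hz : (n - k) % m = 0
        · have hjb : (⟨(n - k) % m, Nat.mod_lt _ (by omega)⟩ : Fin m) = b0 :=
            Fin.ext (by simp [hb0, hz])
          rw [hjb] at hpn'
          constructor
          · simp only [hcol n, hpn', hc1]
            rw [extWord_ge w₁ _ (by omega)]
            show w₂.get b0 = w₂.get ⟨(n - k) % w₂.length, Nat.mod_lt _ (by omega)⟩
            congr 1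
            exact Fin.ext (by simp [hb0, hz]; exact hz.symm)
          · simp only [hpS n, hpn', hc2]
            rw [posA_ge (n + 1) (by omega)]
            refine congrArg _ (congrArg _ (Fin.ext ?_))
            show ((0 : ℕ) + 1) % m = (n + 1 - k) % m
            have e : (n + 1 - k) % m = ((n - k) % m + 1) % m := by
              rw [Nat.mod_add_mod, show n - k + 1 = n + 1 - k by omega]
            rw [e, hz]
        · obtain ⟨hcc, hvv⟩ | ⟨hjb, _, _⟩ :=
            elimB ⟨(n - k) % m, Nat.mod_lt _ (by omega)⟩ _ _
              (hval [] (Sum.inr (Sum.inl ⟨(n - k) % m, Nat.mod_lt _ (by omega)⟩)) trivial)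
          · constructor
            · simp only [hcol n, hpn', hcc]
              rw [extWord_ge w₁ _ (by omega)]
              rfl
            · simp only [hpS n, hpn', hvv]
              exact bn_to_posA n h1
          · exact absurd (congrArg Fin.val hjb) (by simp [hb0, hz])
    have keyA : ∀ n, p n = posA n := by
      intro n
      induction n with
      | zero => rw [hp0, hv0A]
      | succ n ih => exact (hstepA n ih).2
    have colA : col = extWord w₁ (periodicW w₂ h₂) :=
      funext fun n => (hstepA n (keyA n)).1
    exact colA ▸ hcolW
  · -- tail case: the orbit follows posB and produces w₁ · x · y^ω
    right
    have hstepB : ∀ n, p n = posB n →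
        col n = extWord w₁ sxy n ∧ p (n + 1) = posB (n + 1) := by
      intro n hpn
      by_cases h1 : n < k
      · have hpn' : p n = Sum.inl ⟨n, h1⟩ := by rw [hpn]; exact posB_lt n h1
        obtain ⟨hcc, hvv⟩ := elimP ⟨n, h1⟩ _ _ (hval [] (Sum.inl ⟨n, h1⟩) trivial)
        constructor
        · simp only [hcol n, hpn', hcc]
          exact (extWord_lt w₁ _ h1).symm
        · simp only [hpS n, hpn', hvv]
          exact nA_to_posB n h1
      · by_cases h2 : n = k
        · subst h2
          have hpn' : p k = Sum.inr (Sum.inl b0) := by rw [hpn]; exact posB_eq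
          constructor
          · simp only [hcol k, hpn', hc1]
            rw [extWord_ge w₁ _ (by omega)]
            congr 1
            omega
          · simp only [hpS k, hpn', hc2]
            rw [posB_gt (k + 1) (by omega)]
            refine congrArg _ (congrArg _ (Fin.ext ?_))
            show ((t1 : Fin (nx + ny)) : ℕ) = tpos nx ny (k + 1 - k)
            rw [show k + 1 - k = 1 by omega, tpos_one hx, ht1]
        · have hgt : k < n := by omega
          have hpn' : p n = Sum.inr (Sum.inr (tpF (n - k))) := by
            rw [hpn]; exact posB_gt n hgt
          obtain ⟨hcc, hvv⟩ := elimT (tpF (n - k)) _ _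
            (hval [] (Sum.inr (Sum.inr (tpF (n - k)))) trivial)
          constructor
          · simp only [hcol n, hpn', hcc]
            rw [extWord_ge w₁ _ (by omega)]
            show sxy (tpos nx ny (n - k)) = sxy (n - k)
            exact hsxy_tpos (n - k)
          · simp only [hpS n, hpn', hvv]
            rw [tn_to_tpF, posB_gt (n + 1) (by omega)]
            refine congrArg _ (congrArg _ ?_)
            congr 1
            omega
    have keyB : ∀ n, p n = posB n := by
      intro n
      induction n with
      | zero =>
        rw [hp0, hv0A]
        by_cases h : 0 < k
        · rw [posA_lt 0 h, posB_lt 0 h]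
        · have hk0 : k = 0 := by omega
          have hb : posB 0 = Sum.inr (Sum.inl b0) := by rw [← hk0]; exact posB_eq
          rw [posA_ge 0 h, hb]
          refine congrArg _ (congrArg _ (Fin.ext ?_))
          show (0 - k) % m = (0 : ℕ)
          simp
      | succ n ih => exact (hstepB n ih).2
    have colB : col = extWord w₁ sxy :=
      funext fun n => (hstepB n (keyB n)).1
    exact colB ▸ hcolW

end Arena

end Stmt8Aux

set_option maxHeartbeats 16000000 in
/-- an ω-regular objective that is half-positional over finite one-player
arenas is progress-consistent. -/
theorem stmt8 {C : Type} (W : Set (ℕ → C))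
    (hreg : OmegaRegular W) (hpos : HalfPosFinOnePlayer W) :
    ProgressConsistent W := by
  classical
  intro w₁ w₂ h hss
  obtain ⟨Q, hQfin, init, Δ, acc, haccΔ, hW⟩ := hreg
  haveI := hQfin
  obtain ⟨s, hs2, hs1⟩ := Set.exists_of_ssubset hss
  obtain ⟨g, hgmono, hg1, hgmc⟩ := Stmt8Aux.ramsey_pairs
    (fun i j => (Stmt8Aux.RR Δ s i j, Stmt8Aux.RA Δ acc s i j))
  have hR : ∀ i j, i < j → Stmt8Aux.RR Δ s (g i) (g j) = Stmt8Aux.RR Δ s (g 0) (g 1) :=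
    fun i j hij => congrArg Prod.fst (hgmc i j hij)
  have hA : ∀ i j, i < j →
      Stmt8Aux.RA Δ acc s (g i) (g j) = Stmt8Aux.RA Δ acc s (g 0) (g 1) :=
    fun i j hij => congrArg Prod.snd (hgmc i j hij)
  have hg01 : g 0 < g 1 := hgmono (by omega)
  have hy : 1 ≤ g 1 - g 0 := by omega
  -- the pumped ultimately periodic continuation
  have hwinS : NBAAccepts init Δ acc (extWord (w₁ ++ w₂) s) := by
    have : extWord (w₁ ++ w₂) s ∈ W := hs2
    rwa [hW] at this
  obtain ⟨q0, hq0, hacc0⟩ := (Stmt8Aux.accepts_ext_iff init Δ acc (w₁ ++ w₂) s).mp hwinS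
  have haccF := Stmt8Aux.coreF hgmono hg1 hR hA hacc0
  have hwinSxy : extWord (w₁ ++ w₂) (Stmt8Aux.pword s (g 0) (g 1 - g 0)) ∈ W := by
    rw [hW]
    exact (Stmt8Aux.accepts_ext_iff init Δ acc (w₁ ++ w₂) _).mpr ⟨q0, hq0, haccF⟩
  have hper : ∀ j, g 0 ≤ j → Stmt8Aux.pword s (g 0) (g 1 - g 0) j =
      Stmt8Aux.pword s (g 0) (g 1 - g 0) (g 0 + (j - g 0) % (g 1 - g 0)) := by
    intro j hj
    have h1 : Stmt8Aux.pword s (g 0) (g 1 - g 0) j = s (g 0 + (j - g 0) % (g 1 - g 0)) := by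
      show (if j < g 0 then s j else s (g 0 + (j - g 0) % (g 1 - g 0))) = _
      rw [if_neg (by omega)]
    have hlt : (j - g 0) % (g 1 - g 0) < g 1 - g 0 := Nat.mod_lt _ (by omega)
    have h2 : Stmt8Aux.pword s (g 0) (g 1 - g 0) (g 0 + (j - g 0) % (g 1 - g 0)) =
        s (g 0 + (j - g 0) % (g 1 - g 0)) :=
      Stmt8Aux.pword_eq_low s hy _ (by omega)
    rw [h1, h2]
  have hmain := Stmt8Aux.arena_main W hpos w₁ w₂ h
    (Stmt8Aux.pword s (g 0) (g 1 - g 0)) (g 0) (g 1 - g 0) hg1 hy hper hwinSxy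
  rcases hmain with hgoal | hbad
  · exact hgoal
  · exfalso
    rw [hW] at hbad
    obtain ⟨q1, hq1, hacc1⟩ := (Stmt8Aux.accepts_ext_iff init Δ acc w₁ _).mp hbad
    have haccB := Stmt8Aux.coreB hgmono hg1 hR hA hacc1
    apply hs1
    show extWord w₁ s ∈ W
    rw [hW]
    exact (Stmt8Aux.accepts_ext_iff init Δ acc w₁ s).mpr ⟨q1, hq1, haccB⟩
end

section
/- The class of prefix-independent, DBA-recognizable, half-positional objectives is closed under finite union: if W₁ and W₂ are prefix-independent, DBA-recognizable, and half-positional, then so is W₁ ∪ W₂. -/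
/-- Prefix-independence of an objective. -/
def PrefixIndependent {C : Type} (W : Set (ℕ → C)) : Prop :=
  ∀ (w : List C) (s : ℕ → C), s ∈ W ↔ extWord w s ∈ W

/-- The Büchi condition: infinitely many letters in `F`. -/
def BuchiCond {C : Type} (F : Set C) : Set (ℕ → C) :=
  {s | ∀ N, ∃ n ≥ N, s n ∈ F}

/-- DBA-recognizability of an objective. -/
def DBARecognizable {C : Type} (W : Set (ℕ → C)) : Prop :=
  ∃ (Q : Type) (_ : Fintype Q) (qinit : Q) (δ : Q → C → Q) (acc : Q → C → Prop),
    accFrom δ acc qinit = W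

universe u

/-!
Every prefix-independent, DBA-recognizable, half-positional objective `W` is the Büchi condition
`Büchi(F)` for `F = {c | c^ω ∈ W}`; since `Büchi(F₁) ∪ Büchi(F₂) = Büchi(F₁ ∪ F₂)`, and Büchi
conditions are recognized by a one-state automaton and are half-positional (attractor argument),
the union inherits all three properties.

For `W ⊆ Büchi(F)`, a one-vertex arena with a loop for each late letter of `s ∈ W` forces the
positional strategy to pick a single letter `c`, so `c^ω ∈ W`. For the converse, a word of
`Büchi(F) \ W` yields a cycle `v` of the automaton through a letter of `F` without accepting
transitions, so `v^ω ∉ W`. On the other hand, if `e^ω ∈ W` then `(e^k w)^ω ∈ W` for large `k`,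
since the automaton accepts inside any long block of `e`; and `(e^{2k} w w)^ω ∈ W` is a rotation
of the alternation of the loops `w e^k` and `e^k w`, so half-positionality on the two-loop
arena halves `k` down to `1`, giving `v^ω ∈ W` for every `v` containing `e`.
-/

section Words

variable {C : Type}

theorem extWord_of_lt {w : List C} (s : ℕ → C) {n : ℕ} (h : n < w.length) :
    extWord w s n = w[n] := dif_pos h

theorem extWord_length_add (w : List C) (s : ℕ → C) (n : ℕ) :
    extWord w s (w.length + n) = s n := by
  rw [extWord, dif_neg (by omega), Nat.add_sub_cancel_left]

theorem extWord_append (u v : List C) (s : ℕ → C) :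
    extWord (u ++ v) s = extWord u (extWord v s) := by
  funext n
  by_cases hu : n < u.length
  · rw [extWord_of_lt _ hu, extWord_of_lt _ (by simp; omega), List.getElem_append_left hu]
  obtain ⟨m, rfl⟩ := Nat.exists_eq_add_of_le (not_lt.1 hu)
  rw [extWord_length_add]
  by_cases hv : m < v.length
  · rw [extWord_of_lt _ (by simp; omega), extWord_of_lt _ hv,
      List.getElem_append_right (by omega)]
    simp
  · obtain ⟨k, rfl⟩ := Nat.exists_eq_add_of_le (not_lt.1 hv)
    rw [extWord_length_add, ← Nat.add_assoc, ← List.length_append, extWord_length_add]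

def splice {β : Sort*} (k : ℕ) (f g : ℕ → β) : ℕ → β := fun n => if n < k then f n else g (n - k)

section Splice

variable {β : Sort*} {k : ℕ} {f g : ℕ → β}

theorem splice_of_lt {n : ℕ} (h : n < k) : splice k f g n = f n := if_pos h

theorem splice_add (m : ℕ) : splice k f g (k + m) = g m := by simp [splice]

theorem splice_shift (f : ℕ → β) (k : ℕ) : splice k f (fun n => f (n + k)) = f := by
  funext n
  by_cases h : n < k
  · exact splice_of_lt h
  · obtain ⟨m, rfl⟩ := Nat.exists_eq_add_of_le (not_lt.1 h)
    rw [splice_add, Nat.add_comm]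

theorem extWord_eq_splice (s t : ℕ → C) : extWord ((List.range k).map s) t = splice k s t := by
  funext n
  by_cases h : n < k
  · rw [extWord_of_lt t (by simpa using h), splice_of_lt h]
    simp
  · obtain ⟨m, rfl⟩ := Nat.exists_eq_add_of_le (not_lt.1 h)
    simpa [splice_add] using extWord_length_add ((List.range k).map s) t m

end Splice

theorem eq_getElem_mod_of_eq_extWord {u : List C} (hu : u ≠ []) {x : ℕ → C}
    (hx : x = extWord u x) (n : ℕ) :
    x n = u[n % u.length]'(Nat.mod_lt _ (List.length_pos_iff.2 hu)) := by
  induction n using Nat.strong_induction_on with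
  | _ n ih =>
    by_cases h : n < u.length
    · rw [hx, extWord_of_lt x h]
      simp only [Nat.mod_eq_of_lt h]
    · obtain ⟨m, rfl⟩ := Nat.exists_eq_add_of_le (not_lt.1 h)
      rw [hx, extWord_length_add, ih m (by have := List.length_pos_iff.2 hu; omega)]
      simp only [Nat.add_mod_left]

theorem periodic_eq_extWord {u : List C} (hu : u ≠ []) :
    (fun n => u[n % u.length]'(Nat.mod_lt _ (List.length_pos_iff.2 hu))) =
      extWord u fun n => u[n % u.length]'(Nat.mod_lt _ (List.length_pos_iff.2 hu)) := by
  funext n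
  by_cases h : n < u.length
  · rw [extWord_of_lt _ h]
    simp only [Nat.mod_eq_of_lt h]
  · obtain ⟨m, rfl⟩ := Nat.exists_eq_add_of_le (not_lt.1 h)
    rw [extWord_length_add]
    simp only [Nat.add_mod_left]

theorem mul_length_add_of_eq_extWord {u : List C} {x : ℕ → C} (hx : x = extWord u x)
    (N i : ℕ) : x (N * u.length + i) = x i := by
  induction N with
  | zero => simp
  | succ N ih =>
    rw [Nat.succ_mul, Nat.add_comm _ u.length, Nat.add_assoc, hx, extWord_length_add, ← hx, ih]

/-- `u^ω ∈ W`, phrased without a nonemptiness proof: every `u`-periodic word lies in `W`. -/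
def OmegaPowIn (W : Set (ℕ → C)) (u : List C) : Prop :=
  ∀ x : ℕ → C, x = extWord u x → x ∈ W

theorem omegaPowIn_iff {W : Set (ℕ → C)} {u : List C} (hu : u ≠ []) :
    OmegaPowIn W u ↔
      (fun n => u[n % u.length]'(Nat.mod_lt _ (List.length_pos_iff.2 hu))) ∈ W :=
  ⟨fun h => h _ (periodic_eq_extWord hu),
    fun h x hx => (funext (eq_getElem_mod_of_eq_extWord hu hx) : x = _) ▸ h⟩

namespace PrefixIndependent

variable {W : Set (ℕ → C)} (hW : PrefixIndependent W)
include hW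

theorem shift_mem_iff (s : ℕ → C) (k : ℕ) : (fun n => s (n + k)) ∈ W ↔ s ∈ W := by
  conv_rhs => rw [← splice_shift s k, ← extWord_eq_splice]
  exact hW _ _

theorem winCont_eq (w : List C) : winCont W w = W :=
  Set.ext fun s => (hW w s).symm

theorem omegaPowIn_append_comm {u v : List C} (h : OmegaPowIn W (u ++ v)) :
    OmegaPowIn W (v ++ u) := by
  intro x hx
  rw [hW u x]
  refine h _ ?_
  rw [extWord_append, ← extWord_append v u, ← hx]

end PrefixIndependent

end Words

section Automata

variable {C Q : Type} (δ : Q → C → Q) (acc : Q → C → Prop)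

theorem dbaRun_add (q : Q) (s : ℕ → C) (n m : ℕ) :
    dbaRun δ q s (n + m) = dbaRun δ (dbaRun δ q s n) (fun i => s (i + n)) m := by
  induction m with
  | zero => rfl
  | succ m ih => rw [← Nat.add_assoc, dbaRun, ih, dbaRun, Nat.add_comm m n]

variable {δ} in
theorem dbaRun_congr {q : Q} {s t : ℕ → C} {n : ℕ} (h : ∀ i < n, s i = t i) :
    dbaRun δ q s n = dbaRun δ q t n := by
  induction n with
  | zero => rfl
  | succ n ih => rw [dbaRun, dbaRun, ih fun i hi => h i (by omega), h n (by omega)]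

theorem mem_accFrom_iff_shift (q : Q) (s : ℕ → C) (n : ℕ) :
    s ∈ accFrom δ acc q ↔ (fun i => s (i + n)) ∈ accFrom δ acc (dbaRun δ q s n) := by
  constructor
  · intro h N
    obtain ⟨m, hm, hacc⟩ := h (N + n)
    refine ⟨m - n, by omega, ?_⟩
    have hnm : n ≤ m := by omega
    rw [← dbaRun_add]
    simpa only [Nat.add_sub_cancel' hnm, Nat.sub_add_cancel hnm]
  · intro h N
    obtain ⟨i, hi, hacc⟩ := h N
    exact ⟨n + i, by omega, by rwa [dbaRun_add, Nat.add_comm n i]⟩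

variable {δ acc}

theorem accFrom_dbaRun {q₀ : Q} {W : Set (ℕ → C)} (hrec : accFrom δ acc q₀ = W)
    (hW : PrefixIndependent W) (s : ℕ → C) (n : ℕ) :
    accFrom δ acc (dbaRun δ q₀ s n) = W := by
  ext t
  have hshift : (fun i => splice n s t (i + n)) = t := funext fun i => by
    rw [Nat.add_comm, splice_add]
  have hrun : dbaRun δ q₀ (splice n s t) n = dbaRun δ q₀ s n :=
    dbaRun_congr fun i hi => splice_of_lt hi
  rw [hW ((List.range n).map s) t, extWord_eq_splice, ← hrec,
    mem_accFrom_iff_shift δ acc q₀ _ n, hshift, hrun]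

theorem exists_bound_acc_const [Finite Q] (e : C) :
    ∃ M, ∀ p, (fun _ => e) ∈ accFrom δ acc p → ∃ k < M, acc (dbaRun δ p (fun _ => e) k) e := by
  have : ∀ p, ∃ k, (fun _ => e) ∈ accFrom δ acc p → acc (dbaRun δ p (fun _ => e) k) e := by
    intro p
    by_cases h : (fun _ => e) ∈ accFrom δ acc p
    · obtain ⟨k, -, hk⟩ := h 0
      exact ⟨k, fun _ => hk⟩
    · exact ⟨0, fun h' => absurd h' h⟩
  choose K hK using this
  obtain ⟨M, hM⟩ := Finite.bddAbove_range K
  exact ⟨M + 1, fun p hp => ⟨K p, Nat.lt_succ_of_le (hM ⟨p, rfl⟩), hK p hp⟩⟩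

/-- Inside a long enough block of a letter `e` with `e^ω ∈ W`, the automaton, which
recognizes `W` from every reachable state, must take an accepting transition. -/
theorem exists_block_length_mem [Finite Q] {q₀ : Q} {W : Set (ℕ → C)}
    (hrec : accFrom δ acc q₀ = W) (hW : PrefixIndependent W) {e : C}
    (he : (fun _ => e) ∈ W) :
    ∃ M, ∀ x : ℕ → C, (∀ N, ∃ n ≥ N, ∀ i < M, x (n + i) = e) → x ∈ W := by
  obtain ⟨M, hM⟩ := exists_bound_acc_const (δ := δ) (acc := acc) e
  refine ⟨M, fun x hx => ?_⟩
  rw [← hrec]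
  intro N
  obtain ⟨n, hn, hblock⟩ := hx N
  have he' : (fun _ => e) ∈ accFrom δ acc (dbaRun δ q₀ x n) := by
    rwa [accFrom_dbaRun hrec hW]
  obtain ⟨k, hk, hacc⟩ := hM _ he'
  refine ⟨n + k, by omega, ?_⟩
  rwa [dbaRun_add, dbaRun_congr (t := fun _ => e) fun i hi => by
    rw [Nat.add_comm]; exact hblock i (by omega), hblock k hk]

theorem not_mem_accFrom_of_eq_extWord {q : Q} {v : List C} (hv : v ≠ []) {x : ℕ → C}
    (hx : x = extWord v x) (hret : dbaRun δ q x v.length = q)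
    (hsafe : ∀ i < v.length, ¬ acc (dbaRun δ q x i) (x i)) : x ∉ accFrom δ acc q := by
  have hshift : (fun i => x (i + v.length)) = x := funext fun i => by
    conv_lhs => rw [hx, Nat.add_comm, extWord_length_add]
  have hnever : ∀ n, ¬ acc (dbaRun δ q x n) (x n) := by
    intro n
    induction n using Nat.strong_induction_on with
    | _ n ih =>
      by_cases h : n < v.length
      · exact hsafe n h
      obtain ⟨m, rfl⟩ := Nat.exists_eq_add_of_le (not_lt.1 h)
      have hxm : x (v.length + m) = x m := by rw [Nat.add_comm]; exact congrFun hshift m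
      rw [dbaRun_add, hret, hshift, hxm]
      exact ih m (by have := List.length_pos_iff.2 hv; omega)
  intro hmem
  obtain ⟨n, -, hn⟩ := hmem 0
  exact hnever n hn

theorem exists_cycle_not_mem [Finite Q] {q₀ : Q} {W : Set (ℕ → C)}
    (hrec : accFrom δ acc q₀ = W) (hW : PrefixIndependent W) {F : Set C} {s : ℕ → C}
    (hs : s ∉ W) (hF : s ∈ BuchiCond F) :
    ∃ v : List C, ∃ x : ℕ → C, (∃ c ∈ v, c ∈ F) ∧ x = extWord v x ∧ x ∉ W := by
  set r := dbaRun δ q₀ s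
  obtain ⟨N₀, hN₀⟩ : ∃ N₀, ∀ n ≥ N₀, ¬ acc (r n) (s n) := by
    by_contra! h
    exact hs (hrec ▸ h)
  obtain ⟨q, hq⟩ := Finite.exists_infinite_fiber r
  have hinf : {n | r n = q}.Infinite := Set.infinite_coe_iff.mp hq
  obtain ⟨n₁, hn₁, hN₀n₁⟩ := hinf.exists_gt N₀
  obtain ⟨g, hg, hgF⟩ := hF (n₁ + 1)
  obtain ⟨n₂, hn₂, hgn₂⟩ := hinf.exists_gt g
  set v := (List.range (n₂ - n₁)).map fun i => s (n₁ + i)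
  have hvlen : v.length = n₂ - n₁ := by simp [v]
  have hv : v ≠ [] := List.ne_nil_of_length_pos (by omega)
  set x := fun n => v[n % v.length]'(Nat.mod_lt _ (List.length_pos_iff.2 hv))
  have hx : x = extWord v x := periodic_eq_extWord hv
  have hxs : ∀ i < v.length, x i = s (i + n₁) := fun i hi => by
    rw [hx, extWord_of_lt x hi]
    simp [v, Nat.add_comm]
  have hrun : ∀ i ≤ v.length, dbaRun δ (r n₁) x i = r (n₁ + i) := fun i hi => by
    show _ = dbaRun δ q₀ s (n₁ + i)
    rw [dbaRun_add]
    exact dbaRun_congr fun j hj => hxs j (by omega)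
  refine ⟨v, x, ⟨s g, List.mem_map.2 ⟨g - n₁, by simp; omega, by congr 1; omega⟩, hgF⟩, hx, ?_⟩
  rw [← accFrom_dbaRun hrec hW s n₁]
  refine not_mem_accFrom_of_eq_extWord hv hx ?_ fun i hi => ?_
  · rw [hrun _ le_rfl, hvlen, Nat.add_sub_cancel' (by omega)]
    exact hn₂.trans hn₁.symm
  · rw [hrun i hi.le, hxs i hi, Nat.add_comm i]
    exact hN₀ _ (by omega)

end Automata

section OnePlayer

variable {C : Type} {V : Type u} {E : Set (V × C × V)}

@[simp] theorem histPref_length (p : ℕ → V) (col : ℕ → C) (n : ℕ) :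
    (histPref p col n).length = n := by
  simp [histPref]

open Classical in
/-- In a one-player arena every play is the unique consistent play of some strategy. -/
theorem exists_winningFrom_of_isPlay (hnb : ∀ v, ∃ c v', (v, c, v') ∈ E) {P : ℕ → V}
    {s : ℕ → C} (hP : IsPlay E P s) {W : Set (ℕ → C)} (hs : s ∈ W) :
    ∃ τ, ValidStrat E (fun _ => True) τ ∧ WinningFrom W E (fun _ => True) τ (P 0) := by
  choose c v' hcv' using hnb
  let τ : Strat C V := fun h v =>
    if v = P h.length then (s h.length, P (h.length + 1)) else (c v, v' v)
  refine ⟨τ, fun h v _ => ?_, fun p col _ h0 hcons => ?_⟩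
  · by_cases hv : v = P h.length
    · simp only [τ, if_pos hv]
      exact hv ▸ hP h.length
    · simp only [τ, if_neg hv]
      exact hcv' v
  have hstep : ∀ n, p n = P n → (col n, p (n + 1)) = (s n, P (n + 1)) := fun n hn => by
    rw [hcons n trivial]
    simp [τ, hn]
  have hp : ∀ n, p n = P n := fun n => by
    induction n with
    | zero => exact h0
    | succ n ih => exact congrArg Prod.snd (hstep n ih)
  have hcol : col = s := funext fun n => congrArg Prod.fst (hstep n (hp n))
  exact hcol ▸ hs

theorem HalfPositionalAll.exists_positional_winningFrom {W : Set (ℕ → C)}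
    (hW : HalfPositionalAll.{u} W) (hnb : ∀ v, ∃ c v', (v, c, v') ∈ E) {P : ℕ → V}
    {s : ℕ → C} (hP : IsPlay E P s) (hs : s ∈ W) :
    ∃ σ, ValidStrat E (fun _ => True) σ ∧ PositionalStrat σ ∧
      WinningFrom W E (fun _ => True) σ (P 0) := by
  obtain ⟨σ, hval, hpos, hopt⟩ := hW V E (fun _ => True) hnb
  exact ⟨σ, hval, hpos, hopt _ (exists_winningFrom_of_isPlay hnb hP hs)⟩

theorem WinningFrom.mem_of_positional {W : Set (ℕ → C)} {σ : Strat C V} {v : V}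
    (hwin : WinningFrom W E (fun _ => True) σ v) (hval : ValidStrat E (fun _ => True) σ)
    (hpos : PositionalStrat σ) {p : ℕ → V} {col : ℕ → C} (h0 : p 0 = v)
    (hstep : ∀ n, σ [] (p n) = (col n, p (n + 1))) : col ∈ W :=
  hwin p col (fun n => hstep n ▸ hval [] (p n) trivial) h0
    fun n _ => by rw [hpos _ [], hstep]

theorem exists_const_mem_of_mem {W : Set (ℕ → C)} (hW : PrefixIndependent W)
    (hHP : HalfPositionalAll.{u} W) {s : ℕ → C} (hs : s ∈ W) (N : ℕ) :
    ∃ n ≥ N, (fun _ => s n) ∈ W := by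
  let E : Set (PUnit.{u + 1} × C × PUnit.{u + 1}) := {e | ∃ n ≥ N, e.2.1 = s n}
  have hP : IsPlay E (fun _ => PUnit.unit) fun n => s (n + N) := fun n => ⟨n + N, by omega, rfl⟩
  obtain ⟨σ, hval, hpos, hwin⟩ := hHP.exists_positional_winningFrom (E := E)
    (fun _ => ⟨s N, PUnit.unit, N, le_rfl, rfl⟩) hP ((hW.shift_mem_iff s N).2 hs)
  obtain ⟨n, hn, hc⟩ := hval [] PUnit.unit trivial
  refine ⟨n, hn, ?_⟩
  have := hwin.mem_of_positional hval hpos (p := fun _ => PUnit.unit)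
    (col := fun _ => (σ [] PUnit.unit).1) rfl fun _ => rfl
  rwa [hc] at this

end OnePlayer

section Bouquet

variable {C : Type} {α : Type*}

def IsWalk (R : α → C → α → Prop) (Q : ℕ → α) (w : List C) : Prop :=
  ∀ i (hi : i < w.length), R (Q i) w[i] (Q (i + 1))

theorem IsWalk.append {R : α → C → α → Prop} {Q₁ Q₂ : ℕ → α} {w₁ w₂ : List C}
    (h₁ : IsWalk R Q₁ w₁) (h₂ : IsWalk R Q₂ w₂) (hj : Q₁ w₁.length = Q₂ 0) :
    IsWalk R (fun i => if i < w₁.length then Q₁ i else Q₂ (i - w₁.length)) (w₁ ++ w₂) := by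
  intro i hi
  by_cases hi₁ : i < w₁.length
  · rw [List.getElem_append_left hi₁]
    simp only [if_pos hi₁]
    by_cases hi₁' : i + 1 < w₁.length
    · simpa only [if_pos hi₁'] using h₁ i hi₁
    · rw [if_neg hi₁', show i + 1 - w₁.length = 0 by omega, ← hj]
      convert h₁ i hi₁ using 2
      omega
  · rw [List.getElem_append_right (by omega)]
    simp only [if_neg hi₁, if_neg (show ¬ i + 1 < w₁.length by omega),
      show i + 1 - w₁.length = i - w₁.length + 1 by omega]
    exact h₂ _ (by simp at hi; omega)

theorem IsWalk.periodic {R : α → C → α → Prop} {Q : ℕ → α} {w : List C} (h : IsWalk R Q w)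
    (hw : w ≠ []) (hQ : Q w.length = Q 0) (n : ℕ) :
    R (Q (n % w.length)) (w[n % w.length]'(Nat.mod_lt _ (List.length_pos_iff.2 hw)))
      (Q ((n + 1) % w.length)) := by
  have hL := List.length_pos_iff.2 hw
  have hi := Nat.mod_lt n hL
  have hnext : Q ((n + 1) % w.length) = Q (n % w.length + 1) := by
    rw [← Nat.mod_add_mod]
    by_cases h' : n % w.length + 1 < w.length
    · rw [Nat.mod_eq_of_lt h']
    · rw [show n % w.length + 1 = w.length by omega, Nat.mod_self, hQ]
  rw [hnext]
  exact h _ hi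

/-- Two loops `u₁`, `u₂` at the centre `[]`, all vertices owned by Player 1: a vertex is the
word still to be read before the play returns to the centre. -/
def bouquetArena (u₁ u₂ : List C) : Set (ULift.{u} (List C) × C × ULift.{u} (List C)) :=
  {e | (e.1.down = [] ∧ (u₁ = e.2.1 :: e.2.2.down ∨ u₂ = e.2.1 :: e.2.2.down)) ∨
    e.1.down = e.2.1 :: e.2.2.down}

def bouquetLoop (w : List C) (i : ℕ) : ULift.{u} (List C) :=
  ⟨if i = 0 then [] else w.drop i⟩

variable {u₁ u₂ : List C}

theorem bouquetArena_nonblocking (h₁ : u₁ ≠ []) :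
    ∀ v, ∃ c v', (v, c, v') ∈ bouquetArena.{u} u₁ u₂ := by
  rintro ⟨_ | ⟨c, w⟩⟩
  · obtain ⟨c, w, rfl⟩ := List.exists_cons_of_ne_nil h₁
    exact ⟨c, ⟨w⟩, Or.inl ⟨rfl, Or.inl rfl⟩⟩
  · exact ⟨c, ⟨w⟩, Or.inr rfl⟩

theorem eq_of_cons_mem_bouquetArena {c c' : C} {w : List C} {y : ULift.{u} (List C)}
    (h : (⟨c :: w⟩, c', y) ∈ bouquetArena.{u} u₁ u₂) : c' = c ∧ y = ⟨w⟩ := by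
  rcases h with ⟨h, -⟩ | h
  · exact absurd h (List.cons_ne_nil c w)
  · obtain ⟨rfl, h⟩ := List.cons.inj h
    exact ⟨rfl, congrArg ULift.up h.symm⟩

@[simp] theorem bouquetLoop_zero (w : List C) : bouquetLoop.{u} w 0 = ⟨[]⟩ := rfl

theorem bouquetLoop_length {w : List C} (hw : w ≠ []) : bouquetLoop.{u} w w.length = ⟨[]⟩ := by
  simp [bouquetLoop, hw]

theorem isWalk_bouquetLoop {w : List C} (hw : w = u₁ ∨ w = u₂) :
    IsWalk (fun a c b => (a, c, b) ∈ bouquetArena.{u} u₁ u₂) (bouquetLoop w) w := by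
  intro i hi
  rcases Nat.eq_zero_or_pos i with rfl | hi₀
  · refine Or.inl ⟨rfl, ?_⟩
    have hw' : w = w[0] :: (bouquetLoop.{u} w (0 + 1)).down := List.drop_eq_getElem_cons hi
    rcases hw with rfl | rfl
    exacts [Or.inl hw', Or.inr hw']
  · refine Or.inr ?_
    show (if i = 0 then [] else w.drop i) = w[i] :: (if i + 1 = 0 then [] else w.drop (i + 1))
    rw [if_neg hi₀.ne', if_neg i.succ_ne_zero]
    exact List.drop_eq_getElem_cons hi

theorem omegaPowIn_of_positional {W : Set (ℕ → C)} {σ : Strat C (ULift.{u} (List C))}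
    (hval : ValidStrat (bouquetArena u₁ u₂) (fun _ => True) σ) (hpos : PositionalStrat σ)
    (hwin : WinningFrom W (bouquetArena u₁ u₂) (fun _ => True) σ ⟨[]⟩) {c : C} {y : List C}
    (hσ : σ [] ⟨[]⟩ = (c, ⟨y⟩)) : OmegaPowIn W (c :: y) := by
  have hwalk : IsWalk (fun a c b => σ [] a = (c, b)) (bouquetLoop (c :: y)) (c :: y) := by
    intro i hi
    rcases Nat.eq_zero_or_pos i with rfl | hi₀
    · simpa [bouquetLoop] using hσ
    · have hvertex : bouquetLoop (c :: y) i = ⟨(c :: y)[i] :: (c :: y).drop (i + 1)⟩ := by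
        simp [bouquetLoop, hi₀.ne', List.drop_eq_getElem_cons hi]
      have hE := hval [] (bouquetLoop (c :: y) i) trivial
      rw [hvertex] at hE ⊢
      obtain ⟨h₁, h₂⟩ := eq_of_cons_mem_bouquetArena hE
      exact Prod.ext h₁ h₂
  rw [omegaPowIn_iff (List.cons_ne_nil c y)]
  exact hwin.mem_of_positional hval hpos (by simp [bouquetLoop])
    (hwalk.periodic (List.cons_ne_nil c y) (bouquetLoop_length (List.cons_ne_nil c y)))

theorem HalfPositionalAll.omegaPowIn_or_of_append {W : Set (ℕ → C)}
    (hHP : HalfPositionalAll.{u} W) (h₁ : u₁ ≠ []) (h₂ : u₂ ≠ [])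
    (h : OmegaPowIn W (u₁ ++ u₂)) : OmegaPowIn W u₁ ∨ OmegaPowIn W u₂ := by
  have h₁₂ : u₁ ++ u₂ ≠ [] := by simp [h₁]
  have hwalk := (isWalk_bouquetLoop.{u} (u₁ := u₁) (u₂ := u₂) (Or.inl rfl)).append
    (isWalk_bouquetLoop (Or.inr rfl)) (by simp [bouquetLoop_length h₁])
  have hP := hwalk.periodic h₁₂ (by simp [bouquetLoop_length h₂, List.length_pos_iff.2 h₁])
  obtain ⟨σ, hval, hpos, hwin⟩ := hHP.exists_positional_winningFrom
    (bouquetArena_nonblocking h₁) hP ((omegaPowIn_iff h₁₂).1 h)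
  have hwin : WinningFrom W (bouquetArena u₁ u₂) (fun _ => True) σ ⟨[]⟩ := by
    simpa [List.length_pos_iff.2 h₁] using hwin
  rcases hval [] ⟨[]⟩ trivial with ⟨-, hu | hu⟩ | hu
  · exact Or.inl (hu ▸ omegaPowIn_of_positional hval hpos hwin rfl)
  · exact Or.inr (hu ▸ omegaPowIn_of_positional hval hpos hwin rfl)
  · exact absurd hu.symm (List.cons_ne_nil _ _)

end Bouquet

section Characterization

variable {C : Type} {W : Set (ℕ → C)}

theorem omegaPowIn_replicate_of_two_mul (hW : PrefixIndependent W)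
    (hHP : HalfPositionalAll.{u} W) {e : C} {k : ℕ} (hk : k ≠ 0)
    (h : ∀ w, OmegaPowIn W (List.replicate (2 * k) e ++ w)) (w : List C) :
    OmegaPowIn W (List.replicate k e ++ w) := by
  have hmix : OmegaPowIn W ((w ++ List.replicate k e) ++ (List.replicate k e ++ w)) := by
    have := hW.omegaPowIn_append_comm (List.append_assoc _ w w ▸ h (w ++ w))
    rwa [two_mul, List.replicate_add, List.append_assoc, ← List.append_assoc w] at this
  rcases hHP.omegaPowIn_or_of_append (by simp [hk]) (by simp [hk]) hmix with h' | h'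
  exacts [hW.omegaPowIn_append_comm h', h']

theorem omegaPowIn_cons_of_const_mem {Q : Type} [Finite Q] {δ : Q → C → Q}
    {acc : Q → C → Prop} {q₀ : Q} (hrec : accFrom δ acc q₀ = W) (hW : PrefixIndependent W)
    (hHP : HalfPositionalAll.{u} W) {e : C} (he : (fun _ => e) ∈ W) (w : List C) :
    OmegaPowIn W (e :: w) := by
  obtain ⟨M, hM⟩ := exists_block_length_mem hrec hW he
  have hlong : ∀ k ≠ 0, M ≤ k → ∀ w, OmegaPowIn W (List.replicate k e ++ w) := by
    intro k hk hMk w x hx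
    refine hM x fun N => ⟨N * (List.replicate k e ++ w).length,
      Nat.le_mul_of_pos_right N (by simp; omega), fun i hi => ?_⟩
    rw [mul_length_add_of_eq_extWord hx, hx, extWord_of_lt x (by simp; omega),
      List.getElem_append_left (by simp; omega), List.getElem_replicate]
  have hdown : ∀ j k, k ≠ 0 → M ≤ k * 2 ^ j → ∀ w, OmegaPowIn W (List.replicate k e ++ w) := by
    intro j
    induction j with
    | zero => intro k hk hMk; exact hlong k hk (by simpa using hMk)
    | succ j ih =>
      intro k hk hMk
      exact omegaPowIn_replicate_of_two_mul hW hHP hk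
        (ih (2 * k) (by omega) (by rw [pow_succ] at hMk; linarith))
  simpa using hdown M 1 one_ne_zero (by simpa using Nat.lt_two_pow_self.le) w

theorem omegaPowIn_of_const_mem {Q : Type} [Finite Q] {δ : Q → C → Q} {acc : Q → C → Prop}
    {q₀ : Q} (hrec : accFrom δ acc q₀ = W) (hW : PrefixIndependent W)
    (hHP : HalfPositionalAll.{u} W) {v : List C} {c : C} (hc : c ∈ v)
    (hcW : (fun _ => c) ∈ W) : OmegaPowIn W v := by
  obtain ⟨a, b, rfl⟩ := List.append_of_mem hc
  exact hW.omegaPowIn_append_comm (omegaPowIn_cons_of_const_mem hrec hW hHP hcW (b ++ a))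

theorem eq_buchiCond (hW : PrefixIndependent W) (hdba : DBARecognizable W)
    (hHP : HalfPositionalAll.{u} W) : W = BuchiCond {c | (fun _ => c) ∈ W} := by
  obtain ⟨Q, _, q₀, δ, acc, hrec⟩ := hdba
  ext s
  refine ⟨fun hs N => exists_const_mem_of_mem hW hHP hs N, fun hs => ?_⟩
  by_contra hsW
  obtain ⟨v, x, ⟨c, hcv, hcW⟩, hx, hxW⟩ := exists_cycle_not_mem hrec hW hsW hs
  exact hxW (omegaPowIn_of_const_mem hrec hW hHP hcv hcW x hx)

end Characterization

section Plays

variable {C : Type} {V : Type u} {E : Set (V × C × V)} {own1 : V → Prop}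

theorem histPref_add (p : ℕ → V) (col : ℕ → C) (k n : ℕ) :
    histPref p col (k + n) =
      histPref p col k ++ histPref (fun i => p (k + i)) (fun i => col (k + i)) n := by
  simp only [histPref, List.range_add, List.map_append, List.map_map]
  rfl

theorem histPref_congr {p p' : ℕ → V} {col col' : ℕ → C} {n : ℕ}
    (h : ∀ i < n, p i = p' i ∧ col i = col' i) : histPref p col n = histPref p' col' n :=
  List.map_congr_left fun i hi => by
    obtain ⟨hp, hc⟩ := h i (List.mem_range.1 hi)
    rw [hp, hc]

theorem exists_play_of_step (step : List (V × C) → V → C × V) (v : V) :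
    ∃ p col, p 0 = v ∧ ∀ n, (col n, p (n + 1)) = step (histPref p col n) (p n) := by
  let g : ℕ → List (V × C) × V := fun n => Nat.rec ([], v)
    (fun _ hu => (hu.1 ++ [(hu.2, (step hu.1 hu.2).1)], (step hu.1 hu.2).2)) n
  let p n := (g n).2
  let col n := (step (g n).1 (g n).2).1
  have hg : ∀ n, (g n).1 = histPref p col n := by
    intro n
    induction n with
    | zero => rfl
    | succ n ih =>
      show (g n).1 ++ [(p n, col n)] = _
      rw [ih, histPref_add p col n 1]
      rfl
  exact ⟨p, col, rfl, fun n => by rw [← hg n]⟩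

theorem histPref_splice_of_le {k : ℕ} {p p' : ℕ → V} {col col' : ℕ → C} {n : ℕ} (hn : n ≤ k) :
    histPref (splice k p p') (splice k col col') n = histPref p col n :=
  histPref_congr fun i hi => ⟨splice_of_lt (by omega), splice_of_lt (by omega)⟩

theorem histPref_splice_add (k : ℕ) (p p' : ℕ → V) (col col' : ℕ → C) (m : ℕ) :
    histPref (splice k p p') (splice k col col') (k + m) =
      histPref p col k ++ histPref p' col' m := by
  rw [histPref_add, histPref_splice_of_le le_rfl]
  exact congrArg _ (histPref_congr fun i _ => ⟨splice_add i, splice_add i⟩)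

theorem WinningFrom.residual {W : Set (ℕ → C)} {τ : Strat C V} {v : V}
    (hwin : WinningFrom W E own1 τ v) {p : ℕ → V} {col : ℕ → C} (hplay : IsPlay E p col)
    (h0 : p 0 = v) (hcons : ConsistentPlay own1 τ p col) (k : ℕ) :
    WinningFrom (winCont W ((List.range k).map col)) E own1
      (fun h => τ (histPref p col k ++ h)) (p k) := by
  intro p' col' hplay' h0' hcons'
  show extWord _ col' ∈ W
  rw [extWord_eq_splice]
  have hle : ∀ n ≤ k, splice k p p' n = p n := fun n hn => by
    rcases hn.lt_or_eq with hn | rfl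
    · exact splice_of_lt hn
    · exact (splice_add 0).trans h0'
  have hsplit : ∀ n, n < k ∨ ∃ m, n = k + m := fun n =>
    (lt_or_ge n k).imp_right Nat.exists_eq_add_of_le
  refine hwin _ _ (fun n => ?_) ((hle 0 (Nat.zero_le k)).trans h0) (fun n ho => ?_)
  · rcases hsplit n with hn | ⟨m, rfl⟩
    · rw [hle n hn.le, splice_of_lt hn, hle (n + 1) hn]
      exact hplay n
    · rw [splice_add, splice_add, Nat.add_assoc, splice_add]
      exact hplay' m
  · rcases hsplit n with hn | ⟨m, rfl⟩
    · rw [hle n hn.le] at ho ⊢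
      rw [splice_of_lt hn, hle (n + 1) hn, histPref_splice_of_le hn.le]
      exact hcons n ho
    · rw [splice_add] at ho ⊢
      rw [splice_add, Nat.add_assoc, splice_add, histPref_splice_add]
      exact hcons' m ho

end Plays

section Attractor

variable {C : Type} {V : Type u} (E : Set (V × C × V)) (own1 : V → Prop)

theorem OrderHom.exists_rank_lfp {α : Type u} (f : Set α →o Set α) :
    ∃ rank : α → Ordinal.{u}, ∀ a ∈ f.lfp, a ∈ f {b | b ∈ f.lfp ∧ rank b < rank a} := by
  have hex : ∀ a ∈ f.lfp, ∃ o, a ∈ OrdinalApprox.lfpApprox f ⊥ o := fun a ha =>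
    ⟨_, (OrdinalApprox.lfpApprox_ord_eq_lfp f).symm ▸ ha⟩
  let rank a := sInf {o | a ∈ OrdinalApprox.lfpApprox f ⊥ o}
  refine ⟨rank, fun a ha => ?_⟩
  have hmem : a ∈ OrdinalApprox.lfpApprox f ⊥ (rank a) := csInf_mem (hex a ha)
  rw [OrdinalApprox.lfpApprox] at hmem
  obtain ⟨b, hb, hab⟩ : ∃ b < rank a, a ∈ f (OrdinalApprox.lfpApprox f ⊥ b) := by
    simpa using hmem
  have hsub : OrdinalApprox.lfpApprox f ⊥ b ⊆ {c | c ∈ f.lfp ∧ rank c < rank a} := fun c hc =>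
    ⟨OrdinalApprox.lfpApprox_le_of_mem_fixedPoints f f.isFixedPt_lfp bot_le b hc,
      lt_of_le_of_lt (csInf_le' hc) hb⟩
  exact f.mono hsub hab

/-- The vertices from which Player 1 can force the next edge into `T`. -/
def cpre (T : Set (V × C × V)) : Set V :=
  {v | (own1 v → ∃ c v', (v, c, v') ∈ E ∧ (v, c, v') ∈ T) ∧
    (¬ own1 v → ∀ c v', (v, c, v') ∈ E → (v, c, v') ∈ T)}

theorem cpre_mono : Monotone (cpre E own1) := fun _ _ hT _ ⟨h₁, h₂⟩ =>
  ⟨fun ho => (h₁ ho).imp fun _ => Exists.imp fun _ h => ⟨h.1, hT h.2⟩,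
    fun ho c v' hE => hT (h₂ ho c v' hE)⟩

def attractorStep (G : Set (V × C × V)) : Set V →o Set V where
  toFun S := cpre E own1 (G ∪ {e | e.2.2 ∈ S})
  monotone' _ _ h := cpre_mono E own1 (Set.union_subset_union_right G fun _ he => h he)

def attractor (G : Set (V × C × V)) : Set V := (attractorStep E own1 G).lfp

variable {E own1}

theorem exists_attractor_strategy (hnb : ∀ v, ∃ c v', (v, c, v') ∈ E)
    (G : Set (V × C × V)) :
    ∃ f : V → C × V, (∀ v, (v, (f v).1, (f v).2) ∈ E) ∧
      ∀ p col, IsPlay E p col → (∀ n, own1 (p n) → (col n, p (n + 1)) = f (p n)) →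
        p 0 ∈ attractor E own1 G → ∃ k, (p k, col k, p (k + 1)) ∈ G := by
  obtain ⟨rank, hrank⟩ := OrderHom.exists_rank_lfp (attractorStep E own1 G)
  set A := attractor E own1 G
  have hchoice : ∀ v, ∃ e : C × V, (v, e.1, e.2) ∈ E ∧ (own1 v → v ∈ A →
      (v, e.1, e.2) ∈ G ∪ {e' | e'.2.2 ∈ A ∧ rank e'.2.2 < rank v}) := fun v => by
    by_cases h : own1 v ∧ v ∈ A
    · obtain ⟨c, v', hE, hT⟩ := (hrank v h.2).1 h.1
      exact ⟨(c, v'), hE, fun _ _ => hT⟩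
    · obtain ⟨c, v', hE⟩ := hnb v
      exact ⟨(c, v'), hE, fun h₁ h₂ => absurd ⟨h₁, h₂⟩ h⟩
  choose f hfE hfT using hchoice
  refine ⟨f, hfE, fun p col hplay hcons h0 => ?_⟩
  -- induction on the rank of the starting vertex: every step either hits `G` or lowers it
  induction hr : rank (p 0) using WellFoundedLT.induction generalizing p col with
  | ind o ih =>
    have hstep : (p 0, col 0, p 1) ∈ G ∪ {e | e.2.2 ∈ A ∧ rank e.2.2 < rank (p 0)} := by
      by_cases ho : own1 (p 0)
      · rw [hcons 0 ho]
        exact hfT _ ho h0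
      · exact (hrank _ h0).2 ho _ _ (hplay 0)
    rcases hstep with hG | ⟨hA, hlt⟩
    · exact ⟨0, hG⟩
    · obtain ⟨k, hk⟩ := ih _ (hr ▸ hlt) (fun n => p (n + 1)) (fun n => col (n + 1))
        (fun n => hplay (n + 1)) (fun n => hcons (n + 1)) hA rfl
      exact ⟨k + 1, hk⟩

theorem mem_attractor_of_mem_cpre {G : Set (V × C × V)} {v : V}
    (h : v ∈ cpre E own1 (G ∪ {e | e.2.2 ∈ attractor E own1 G})) : v ∈ attractor E own1 G := by
  rw [attractor, ← OrderHom.map_lfp]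
  exact h

theorem forall_edge_avoid_of_not_mem_attractor {G : Set (V × C × V)} {v : V}
    (hv : v ∉ attractor E own1 G) (ho : own1 v) {c : C} {v' : V} (hE : (v, c, v') ∈ E) :
    (v, c, v') ∉ G ∧ v' ∉ attractor E own1 G := by
  by_contra h
  rw [not_and_or, not_not, not_not] at h
  exact hv (mem_attractor_of_mem_cpre ⟨fun _ => ⟨c, v', hE, h⟩, fun h' => absurd ho h'⟩)

theorem exists_edge_avoid_of_not_mem_attractor {G : Set (V × C × V)} {v : V}
    (hv : v ∉ attractor E own1 G) (ho : ¬ own1 v) :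
    ∃ c v', (v, c, v') ∈ E ∧ (v, c, v') ∉ G ∧ v' ∉ attractor E own1 G := by
  by_contra! h
  exact hv (mem_attractor_of_mem_cpre ⟨fun h' => absurd h' ho, fun _ c v' hE =>
    (em ((v, c, v') ∈ G)).elim Or.inl fun hG => Or.inr (h c v' hE hG)⟩)

theorem exists_play_avoiding (hnb : ∀ v, ∃ c v', (v, c, v') ∈ E) {G : Set (V × C × V)}
    {τ : Strat C V} (hτ : ValidStrat E own1 τ) {v : V} (hv : v ∉ attractor E own1 G) :
    ∃ p col, IsPlay E p col ∧ p 0 = v ∧ ConsistentPlay own1 τ p col ∧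
      ∀ n, (p n, col n, p (n + 1)) ∉ G := by
  set A := attractor E own1 G
  have hchoice : ∀ v, ∃ e : C × V, (v, e.1, e.2) ∈ E ∧ (v ∉ A → ¬ own1 v →
      (v, e.1, e.2) ∉ G ∧ e.2 ∉ A) := fun v => by
    by_cases h : v ∉ A ∧ ¬ own1 v
    · obtain ⟨c, v', hE, hout⟩ := exists_edge_avoid_of_not_mem_attractor h.1 h.2
      exact ⟨(c, v'), hE, fun _ _ => hout⟩
    · obtain ⟨c, v', hE⟩ := hnb v
      exact ⟨(c, v'), hE, fun h₁ h₂ => absurd ⟨h₁, h₂⟩ h⟩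
  choose π hπE hπ using hchoice
  classical
  obtain ⟨p, col, h0, hstep⟩ := exists_play_of_step
    (fun h u => if own1 u then τ h u else π u) v
  have hcons : ConsistentPlay own1 τ p col := fun n ho => by rw [hstep, if_pos ho]
  have hedge : ∀ n, (p n, col n, p (n + 1)) ∈ E ∧
      (p n ∉ A → (p n, col n, p (n + 1)) ∉ G ∧ p (n + 1) ∉ A) := fun n => by
    by_cases ho : own1 (p n)
    · have hE : (p n, col n, p (n + 1)) ∈ E := (hcons n ho) ▸ hτ _ _ ho
      exact ⟨hE, fun hA => forall_edge_avoid_of_not_mem_attractor hA ho hE⟩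
    · have hpair : (col n, p (n + 1)) = π (p n) := (hstep n).trans (if_neg ho)
      rw [show col n = _ from congrArg Prod.fst hpair,
        show p (n + 1) = _ from congrArg Prod.snd hpair]
      exact ⟨hπE _, fun hA => hπ _ hA ho⟩
  have hout : ∀ n, p n ∉ A := fun n => by
    induction n with
    | zero => exact h0 ▸ hv
    | succ n ih => exact ((hedge n).2 ih).2
  exact ⟨p, col, fun n => (hedge n).1, h0, hcons, fun n => ((hedge n).2 (hout n)).1⟩

end Attractor

section Buchi

variable {C : Type}

theorem buchiCond_union (F₁ F₂ : Set C) :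
    BuchiCond F₁ ∪ BuchiCond F₂ = BuchiCond (F₁ ∪ F₂) := by
  have h : ∀ F : Set C, BuchiCond F = {s | ∃ᶠ n in Filter.atTop, s n ∈ F} := fun F =>
    Set.ext fun _ => Filter.frequently_atTop.symm
  ext s
  simp only [h, Set.mem_union, Set.mem_ofPred_eq, Filter.frequently_or_distrib]

theorem buchiCond_prefixIndependent (F : Set C) : PrefixIndependent (BuchiCond F) := by
  intro w s
  constructor
  · intro hs N
    obtain ⟨n, hn, hF⟩ := hs N
    exact ⟨w.length + n, by omega, by rwa [extWord_length_add]⟩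
  · intro hs N
    obtain ⟨m, hm, hF⟩ := hs (w.length + N)
    obtain ⟨n, rfl⟩ := Nat.exists_eq_add_of_le (show w.length ≤ m by omega)
    exact ⟨n, by omega, by rwa [extWord_length_add] at hF⟩

theorem buchiCond_dbaRecognizable (F : Set C) : DBARecognizable (BuchiCond F) :=
  ⟨Unit, inferInstance, (), fun q _ => q, fun _ c => c ∈ F, rfl⟩

/-- Player 1 attracts to an `F`-edge leading back into her winning region `Y`; every vertex of
`Y` lies in that attractor, since a play avoiding it forever would, by the residual of a
winning strategy, still take such an edge. -/
theorem buchiCond_halfPositional (F : Set C) : HalfPositionalAll.{u} (BuchiCond F) := by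
  intro V E own1 hnb
  set Y := {v | ∃ τ, ValidStrat E own1 τ ∧ WinningFrom (BuchiCond F) E own1 τ v}
  obtain ⟨f, hfE, hreach⟩ :=
    exists_attractor_strategy (own1 := own1) hnb {e | e.2.1 ∈ F ∧ e.2.2 ∈ Y}
  have hYA : Y ⊆ attractor E own1 {e | e.2.1 ∈ F ∧ e.2.2 ∈ Y} := by
    rintro v ⟨τ, hτ, hwin⟩
    by_contra hv
    obtain ⟨p, col, hplay, h0, hcons, hG⟩ := exists_play_avoiding hnb hτ hv
    obtain ⟨k, -, hk⟩ := hwin p col hplay h0 hcons 0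
    refine hG k ⟨hk, fun h => τ (histPref p col (k + 1) ++ h), fun h u ho => hτ _ u ho, ?_⟩
    rw [← (buchiCond_prefixIndependent F).winCont_eq ((List.range (k + 1)).map col)]
    exact hwin.residual hplay h0 hcons (k + 1)
  refine ⟨fun _ => f, fun _ v _ => hfE v, fun _ _ _ => rfl, fun v hv p col hplay h0 hcons => ?_⟩
  have hnext : ∀ n, p n ∈ Y → ∃ k, col (n + k) ∈ F ∧ p (n + k + 1) ∈ Y := fun n hn =>
    hreach (fun i => p (n + i)) (fun i => col (n + i)) (fun i => hplay (n + i))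
      (fun i => hcons (n + i)) (hYA hn)
  have hY : ∀ N, ∃ n ≥ N, p n ∈ Y := by
    intro N
    induction N with
    | zero => exact ⟨0, le_rfl, h0 ▸ hv⟩
    | succ N ih =>
      obtain ⟨n, hn, hpn⟩ := ih
      obtain ⟨k, -, hk⟩ := hnext n hpn
      exact ⟨n + k + 1, by omega, hk⟩
  intro N
  obtain ⟨n, hn, hpn⟩ := hY N
  obtain ⟨k, hk, -⟩ := hnext n hpn
  exact ⟨n + k, by omega, hk⟩

end Buchi

/-- prefix-independent DBA-recognizable half-positional objectives are
closed under (finite) union. -/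
theorem stmt11 {C : Type} (W₁ W₂ : Set (ℕ → C))
    (h₁ : PrefixIndependent W₁ ∧ DBARecognizable W₁ ∧ HalfPositionalAll.{u} W₁)
    (h₂ : PrefixIndependent W₂ ∧ DBARecognizable W₂ ∧ HalfPositionalAll.{u} W₂) :
    PrefixIndependent (W₁ ∪ W₂) ∧ DBARecognizable (W₁ ∪ W₂) ∧
      HalfPositionalAll.{u} (W₁ ∪ W₂) := by
  obtain ⟨hpi₁, hdba₁, hhp₁⟩ := h₁
  obtain ⟨hpi₂, hdba₂, hhp₂⟩ := h₂
  have hunion : W₁ ∪ W₂ = BuchiCond ({c | (fun _ => c) ∈ W₁} ∪ {c | (fun _ => c) ∈ W₂}) := by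
    rw [← buchiCond_union, ← eq_buchiCond hpi₁ hdba₁ hhp₁, ← eq_buchiCond hpi₂ hdba₂ hhp₂]
  refine ⟨fun w s => ?_, ?_, ?_⟩
  · rw [Set.mem_union, Set.mem_union, hpi₁ w s, hpi₂ w s]
  · exact hunion ▸ buchiCond_dbaRecognizable _
  · exact hunion ▸ buchiCond_halfPositional _
end

section
/- An objective W ⊆ C^ω has a total prefix preorder if and only if W is strongly monotone: for all sets M, N ⊆ C^ω, if there exists w ∈ C* such that all words in wM are losing and some word in wN is winning, then for all w' ∈ C*, if some word of w'M is winning then some word of w'N is winning. -/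
/-- `W` has a total prefix preorder iff `W` is strongly monotone. -/
theorem stmt17 {C : Type} (W : Set (ℕ → C)) :
    (∀ w₁ w₂ : List C, winCont W w₁ ⊆ winCont W w₂ ∨ winCont W w₂ ⊆ winCont W w₁) ↔
    (∀ M N : Set (ℕ → C),
      (∃ w : List C, (extWord w '' M) ∩ W = ∅ ∧ ((extWord w '' N) ∩ W).Nonempty) →
      ∀ w' : List C, ((extWord w' '' M) ∩ W).Nonempty →
        ((extWord w' '' N) ∩ W).Nonempty) := by
  have key : ∀ (M : Set (ℕ → C)) (w : List C),
      ((extWord w '' M) ∩ W).Nonempty ↔ (M ∩ winCont W w).Nonempty := by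
    intro M w
    constructor
    · rintro ⟨x, ⟨m, hm, rfl⟩, hxW⟩
      exact ⟨m, hm, hxW⟩
    · rintro ⟨m, hm, hmW⟩
      exact ⟨extWord w m, ⟨m, hm, rfl⟩, hmW⟩
  constructor
  · intro htot M N ⟨w, hMe, hNne⟩ w' hM'
    rw [key] at hNne hM' ⊢
    rcases htot w w' with h | h
    · rcases hNne with ⟨n, hn, hnw⟩
      exact ⟨n, hn, h hnw⟩
    · exfalso
      rcases hM' with ⟨m, hm, hmw⟩
      have : extWord w m ∈ (extWord w '' M) ∩ W := ⟨⟨m, hm, rfl⟩, h hmw⟩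
      rw [hMe] at this
      exact this
  · intro hsm w₁ w₂
    by_contra h
    push_neg at h
    obtain ⟨h1, h2⟩ := h
    rw [Set.not_subset] at h1 h2
    obtain ⟨s, hs1, hs2⟩ := h1
    obtain ⟨t, ht2, ht1⟩ := h2
    have := hsm {t} {s} ⟨w₁, ?_, ?_⟩ w₂ ?_
    · rw [key] at this
      rcases this with ⟨x, hx, hxw⟩
      rw [Set.mem_singleton_iff] at hx
      subst hx
      exact hs2 hxw
    · ext x
      simp only [Set.mem_inter_iff, Set.mem_image, Set.mem_singleton_iff,
        Set.mem_empty_iff_false, iff_false, not_and]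
      rintro ⟨m, rfl, rfl⟩
      exact ht1
    · rw [key]; exact ⟨s, rfl, hs1⟩
    · rw [key]; exact ⟨t, rfl, ht2⟩
end
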